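/- arXiv:2405.08488 — 6 statements merged into one kernel-verified Lean document; each statement's English description precedes it below -/
import Mathlib

section
/- If C and C' are two cycles in a finite graph Ω with Hamiltonian H and C ∩ C' ≠ ∅, then C ⊆ C' or C' ⊆ C. -/
variable {Ω : Type*}

/-- A set `A` is connected: any two of its elements are joined by a path inside `A`. -/
def SetConnected (adj : Ω → Ω → Prop) (A : Set Ω) : Prop :=
  ∀ η ∈ A, ∀ ξ ∈ A, ∃ ω : List Ω, ω.Chain' adj ∧ ω.head? = some η ∧
    ω.getLast? = some ξ ∧ ∀ x ∈ ω, x ∈ A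

/-- The outer boundary `∂A`: vertices outside `A` adjacent to some vertex of `A`. -/
def outerBoundary (adj : Ω → Ω → Prop) (A : Set Ω) : Set Ω :=
  {ξ | ξ ∉ A ∧ ∃ η ∈ A, adj η ξ}

/-- A (nontrivial) cycle: a nonempty connected set on which `H` is everywhere strictly
below the value of `H` at every point of the outer boundary. -/
def IsCycle (adj : Ω → Ω → Prop) (H : Ω → ℝ) (A : Set Ω) : Prop :=
  A.Nonempty ∧ SetConnected adj A ∧
    ∀ η ∈ A, ∀ ξ ∈ outerBoundary adj A, H η < H ξ

lemma exists_exit (adj : Ω → Ω → Prop) (C' : Set Ω) :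
    ∀ ω : List Ω, ω.Chain' adj → ∀ z x : Ω, ω.head? = some z → ω.getLast? = some x →
      z ∈ C' → x ∉ C' → ∃ b ∈ ω, b ∈ outerBoundary adj C'
  | [] => by simp
  | [a] => by
      intro _ z x hz hx hzC hxC
      simp only [List.head?_cons, Option.some.injEq] at hz
      simp only [List.getLast?_singleton, Option.some.injEq] at hx
      subst hz; subst hx; exact absurd hzC hxC
  | a :: b :: rest => by
      intro hch z x hz hx hzC hxC
      simp only [List.head?_cons, Option.some.injEq] at hz
      subst hz
      obtain ⟨hab, htail⟩ := List.isChain_cons_cons.mp hch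
      rw [List.getLast?_cons_cons] at hx
      by_cases hb : b ∈ C'
      · obtain ⟨c, hc, hcB⟩ := exists_exit adj C' (b :: rest) htail b x rfl hx hb hxC
        exact ⟨c, List.mem_cons_of_mem _ hc, hcB⟩
      · exact ⟨b, List.mem_cons_of_mem _ List.mem_cons_self, hb, a, hzC, hab⟩

/-- two intersecting cycles are nested. -/
theorem cycle_nested [Fintype Ω] (adj : Ω → Ω → Prop) (hsym : Symmetric adj)
    (H : Ω → ℝ)
    (hconn : ∀ η ξ : Ω, ∃ ω : List Ω,
      ω.Chain' adj ∧ ω.head? = some η ∧ ω.getLast? = some ξ)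
    (C C' : Set Ω) (hC : IsCycle adj H C) (hC' : IsCycle adj H C')
    (hmeet : (C ∩ C').Nonempty) : C ⊆ C' ∨ C' ⊆ C := by
  by_contra hcon
  push_neg at hcon
  obtain ⟨h1, h2⟩ := hcon
  obtain ⟨x, hxC, hxC'⟩ := Set.not_subset.mp h1
  obtain ⟨y, hyC', hyC⟩ := Set.not_subset.mp h2
  obtain ⟨z, hzC, hzC'⟩ := hmeet
  obtain ⟨ω, hch, hhd, hlast, hmem⟩ := hC.2.1 z hzC x hxC
  obtain ⟨b, hbω, hbB⟩ := exists_exit adj C' ω hch z x hhd hlast hzC' hxC'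
  obtain ⟨ω', hch', hhd', hlast', hmem'⟩ := hC'.2.1 z hzC' y hyC'
  obtain ⟨b', hb'ω, hb'B⟩ := exists_exit adj C ω' hch' z y hhd' hlast' hzC hyC
  have h1 : H b < H b' := hC.2.2 b (hmem b hbω) b' hb'B
  have h2 : H b' < H b := hC'.2.2 b' (hmem' b' hb'ω) b hbB
  linarith
end

section
/- Let P₁, ..., P_{ν} be the stable plateaux in a finite connected graph Ω with Hamiltonian H, with ν ≥ 2. For each i let Γᵢ = Φ(Pᵢ, ⋃_{j≠i} Pⱼ) − H(Pᵢ) and Vᵢ = {η : Φ(Pᵢ, η) − H(Pᵢ) < Γᵢ}. Then the sets Vᵢ are pairwise disjoint. -/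
variable {Ω : Type*}

def IsStablePlateau (adj : Ω → Ω → Prop) (H : Ω → ℝ) (A : Set Ω) : Prop :=
  A.Nonempty ∧ SetConnected adj A ∧ (∀ η ∈ A, ∀ ξ ∈ A, H η = H ξ) ∧
    ∀ ζ ∈ outerBoundary adj A, ∀ η ∈ A, H η < H ζ

/-- Communication height `Φ(A, B)` between two sets: the minimal `h` admitting a path
from `A` to `B` along which `H` stays `≤ h`. -/
noncomputable def setCommHeight (adj : Ω → Ω → Prop) (H : Ω → ℝ) (A B : Set Ω) : ℝ :=
  sInf {h : ℝ | ∃ ω : List Ω, ω.Chain' adj ∧ (∃ η ∈ A, ω.head? = some η) ∧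
    (∃ ξ ∈ B, ω.getLast? = some ξ) ∧ ∀ x ∈ ω, H x ≤ h}

/-- Concatenate two chains sharing an endpoint. -/
lemma chain_glue {adj : Ω → Ω → Prop} {l₁ l₂ : List Ω} {η : Ω}
    (h₁ : l₁.Chain' adj) (h₂ : l₂.Chain' adj)
    (e₁ : l₁.getLast? = some η) (e₂ : l₂.head? = some η) :
    (l₁ ++ l₂.tail).Chain' adj ∧ (l₁ ++ l₂.tail).head? = l₁.head? ∧
      (l₁ ++ l₂.tail).getLast? = l₂.getLast? ∧
      ∀ x ∈ l₁ ++ l₂.tail, x ∈ l₁ ∨ x ∈ l₂ := by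
  obtain ⟨t, rfl⟩ : ∃ t, l₂ = η :: t := by
    cases l₂ with
    | nil => simp at e₂
    | cons a t =>
      simp only [List.head?_cons, Option.some.injEq] at e₂
      exact ⟨t, by rw [e₂]⟩
  have hne₁ : l₁ ≠ [] := by rintro rfl; simp at e₁
  replace h₂ := List.isChain_cons.1 h₂
  refine ⟨?_, ?_, ?_, ?_⟩
  · apply List.isChain_append.2
    refine ⟨h₁, h₂.2, ?_⟩
    intro x hx y hy
    rw [e₁] at hx
    cases hx
    exact h₂.1 y hy
  · cases l₁ with
    | nil => simp at e₁
    | cons a s => simp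
  · cases t with
    | nil => simpa using e₁
    | cons b s =>
      obtain ⟨z, hz⟩ : ∃ z, (b :: s).getLast? = some z :=
        ⟨(b :: s).getLast (by simp), List.getLast?_eq_getLast (by simp)⟩
      simp [List.getLast?_append, hz]
  · intro x hx
    rcases List.mem_append.1 hx with h | h
    · exact Or.inl h
    · exact Or.inr (List.mem_cons_of_mem _ h)

lemma chain_rev {adj : Ω → Ω → Prop} (hsym : Symmetric adj) {l : List Ω}
    (h : l.Chain' adj) : l.reverse.Chain' adj :=
  List.isChain_reverse.2 (h.imp fun _ _ hab => hsym hab)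

/-- the valleys `Vᵢ = {η : Φ(Pᵢ, η) − H(Pᵢ) < Γᵢ}` attached to the stable
plateaux are pairwise disjoint. -/
theorem valleys_pairwise_disjoint [Fintype Ω] (adj : Ω → Ω → Prop)
    (hsym : Symmetric adj) (H : Ω → ℝ)
    (hconn : ∀ η ξ : Ω, ∃ ω : List Ω,
      ω.Chain' adj ∧ ω.head? = some η ∧ ω.getLast? = some ξ)
    (ν : ℕ) (hν : 2 ≤ ν) (P : Fin ν → Set Ω)
    (hplat : ∀ i, IsStablePlateau adj H (P i))
    (hdisj : ∀ i j, i ≠ j → Disjoint (P i) (P j))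
    (val : Fin ν → ℝ) (hval : ∀ i, ∀ η ∈ P i, H η = val i)
    (Γ : Fin ν → ℝ)
    (hΓ : ∀ i, Γ i = setCommHeight adj H (P i) {η | ∃ j, j ≠ i ∧ η ∈ P j} - val i)
    (hΓpos : ∀ i, 0 < Γ i)
    (V : Fin ν → Set Ω)
    (hV : ∀ i, V i = {η | setCommHeight adj H (P i) {η} - val i < Γ i}) :
    ∀ i j, i ≠ j → Disjoint (V i) (V j) := by
  intro i j hij
  rw [Set.disjoint_left]
  intro η hηi hηj
  haveI : Nonempty Ω := ⟨(hplat i).1.some⟩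
  -- lower bound for any path-height set
  have hbdd : ∀ A B : Set Ω, BddBelow {h : ℝ | ∃ ω : List Ω, ω.Chain' adj ∧
      (∃ a ∈ A, ω.head? = some a) ∧ (∃ b ∈ B, ω.getLast? = some b) ∧ ∀ x ∈ ω, H x ≤ h} := by
    intro A B
    refine ⟨Finset.univ.inf' Finset.univ_nonempty H, ?_⟩
    rintro h ⟨ω, -, ⟨a, -, ha⟩, -, hb⟩
    have hmem : a ∈ ω := by
      cases ω with
      | nil => simp at ha
      | cons c t => simp only [List.head?_cons, Option.some.injEq] at ha; simp [ha]
    exact le_trans (Finset.inf'_le _ (Finset.mem_univ a)) (hb a hmem)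
  -- nonemptiness of singleton-target path-height sets
  have hne : ∀ (k : Fin ν) (ξ : Ω), Set.Nonempty {h : ℝ | ∃ ω : List Ω, ω.Chain' adj ∧
      (∃ a ∈ P k, ω.head? = some a) ∧ (∃ b ∈ ({ξ} : Set Ω), ω.getLast? = some b) ∧
      ∀ x ∈ ω, H x ≤ h} := by
    intro k ξ
    obtain ⟨a, ha⟩ := (hplat k).1
    obtain ⟨ω, hc, hh, hl⟩ := hconn a ξ
    exact ⟨Finset.univ.sup' Finset.univ_nonempty H, ω, hc, ⟨a, ha, hh⟩, ⟨ξ, rfl, hl⟩,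
      fun x _ => Finset.le_sup' H (Finset.mem_univ x)⟩
  simp only [hV, Set.mem_setOf_eq, sub_lt_iff_lt_add] at hηi hηj
  simp only [setCommHeight] at hηi hηj
  obtain ⟨h₁, ⟨ω₁, hc₁, ⟨a, haP, hha⟩, ⟨ξ₁, hξ₁, hla⟩, hb₁⟩, hlt₁⟩ :=
    exists_lt_of_csInf_lt (hne i η) hηi
  obtain ⟨h₂, ⟨ω₂, hc₂, ⟨b, hbP, hhb⟩, ⟨ξ₂, hξ₂, hlb⟩, hb₂⟩, hlt₂⟩ :=
    exists_lt_of_csInf_lt (hne j η) hηj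
  rw [Set.mem_singleton_iff] at hξ₁ hξ₂
  rw [hξ₁] at hla; rw [hξ₂] at hlb
  -- glue ω₁ with reversed ω₂ : a path from P i to P j
  have key : ∀ (k l : Fin ν) (c d : Ω) (u v : List Ω), k ≠ l → c ∈ P k → d ∈ P l →
      u.Chain' adj → v.Chain' adj → u.head? = some c → u.getLast? = some η →
      v.head? = some d → v.getLast? = some η → (∀ x ∈ u, H x ≤ h₁ ⊔ h₂) →
      (∀ x ∈ v, H x ≤ h₁ ⊔ h₂) →
      Γ k + val k ≤ h₁ ⊔ h₂ := by
    intro k l c d u v hkl hc hd hcu hcv hhu hlu hhv hlv hbu hbv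
    have rcv := chain_rev hsym hcv
    have rhv : v.reverse.head? = some η := by rw [List.head?_reverse, hlv]
    have rlv : v.reverse.getLast? = some d := by rw [List.getLast?_reverse, hhv]
    obtain ⟨gc, gh, gl, gm⟩ := chain_glue hcu rcv hlu rhv
    have hmem : (h₁ ⊔ h₂) ∈ {h : ℝ | ∃ ω : List Ω, ω.Chain' adj ∧
        (∃ a ∈ P k, ω.head? = some a) ∧
        (∃ b ∈ {x | ∃ m, m ≠ k ∧ x ∈ P m}, ω.getLast? = some b) ∧ ∀ x ∈ ω, H x ≤ h₁ ⊔ h₂} := by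
      refine ⟨u ++ v.reverse.tail, gc, ⟨c, hc, by rw [gh, hhu]⟩,
        ⟨d, ⟨l, hkl.symm, hd⟩, by rw [gl, rlv]⟩, ?_⟩
      intro x hx
      rcases gm x hx with h | h
      · exact hbu x h
      · exact hbv x (List.mem_reverse.1 h)
    have hle := csInf_le (hbdd (P k) {x | ∃ m, m ≠ k ∧ x ∈ P m}) hmem
    have hΓk := hΓ k
    simp only [setCommHeight] at hΓk
    linarith
  have k1 := key i j a b ω₁ ω₂ hij haP hbP hc₁ hc₂ hha hla hhb hlb
    (fun x hx => le_trans (hb₁ x hx) le_sup_left)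
    (fun x hx => le_trans (hb₂ x hx) le_sup_right)
  have k2 := key j i b a ω₂ ω₁ hij.symm hbP haP hc₂ hc₁ hhb hlb hha hla
    (fun x hx => le_trans (hb₂ x hx) le_sup_right)
    (fun x hx => le_trans (hb₁ x hx) le_sup_left)
  rcases max_choice h₁ h₂ with h | h <;> rw [h] at k1 k2 <;> linarith
end

section
/- In the Ising lattice gas on the K×L torus (K > L) with N = L·N₀ particles where L/4 < N₀ < K/2, every configuration η satisfies H(η) ≥ −2LN₀ + L, with equality if and only if η = σᵏ for some k ∈ 𝕋_K, where σᵏ is the configuration whose occupied sites are exactly the union of the N₀ consecutive columns c^k, c^{k+1}, ..., c^{k+N₀−1}. -/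
/-- The Ising lattice-gas Hamiltonian on the `K × L` torus, written as a sum over the
two oriented edge directions. -/
noncomputable def Ham (K L : ℕ) [NeZero K] [NeZero L] (η : ZMod K × ZMod L → ℕ) : ℝ :=
  -((∑ x : ZMod K × ZMod L, (η x : ℝ) * (η (x + (1, 0)) : ℝ)) +
    (∑ x : ZMod K × ZMod L, (η x : ℝ) * (η (x + (0, 1)) : ℝ)))

/-- The strip configuration `σᵏ`: occupied sites are columns `k, k+1, …, k+N₀−1`. -/
def strip (K L N₀ : ℕ) [NeZero K] [NeZero L] (k : ZMod K) : ZMod K × ZMod L → ℕ :=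
  fun x => if (x.1 - k).val < N₀ then 1 else 0

namespace GroundStateAux

variable {n : ℕ} [NeZero n]

/-- Number of cyclic "descents" `1 → 0` of a 0/1 function on `ZMod n`. -/
def desc (f : ZMod n → ℕ) : ℕ := ∑ i, f i * (1 - f (i + 1))

lemma sum_shift (f : ZMod n → ℕ) : ∑ i, f (i + 1) = ∑ i, f i :=
  Fintype.sum_equiv (Equiv.addRight 1) _ _ (fun _ => rfl)

lemma desc_add (f : ZMod n → ℕ) (hf : ∀ i, f i ≤ 1) :
    (∑ i, f i * f (i + 1)) + desc f = ∑ i, f i := by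
  rw [desc, ← Finset.sum_add_distrib]
  refine Finset.sum_congr rfl fun i _ => ?_
  have h1 : f (i + 1) + (1 - f (i + 1)) = 1 := by have := hf (i + 1); omega
  rw [← mul_add, h1, mul_one]

lemma asc_eq (f : ZMod n → ℕ) (hf : ∀ i, f i ≤ 1) :
    ∑ i, (1 - f i) * f (i + 1) = desc f := by
  have h1 : (∑ i, f i * f (i + 1)) + ∑ i, (1 - f i) * f (i + 1) = ∑ i, f i := by
    rw [← Finset.sum_add_distrib, ← sum_shift f]
    refine Finset.sum_congr rfl fun i _ => ?_
    have h2 : f i + (1 - f i) = 1 := by have := hf i; omega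
    rw [← add_mul, h2, one_mul]
  have h3 := desc_add f hf
  omega

lemma reach (f : ZMod n → ℕ) (h : ∀ i, f i = 1 → f (i + 1) = 1) {i : ZMod n}
    (hi : f i = 1) (j : ZMod n) : f j = 1 := by
  have key : ∀ m : ℕ, f (i + (m : ZMod n)) = 1 := by
    intro m
    induction m with
    | zero => simpa using hi
    | succ m ih =>
      have := h _ ih
      rwa [Nat.cast_succ, ← add_assoc]
  have := key (j - i).val
  rwa [ZMod.natCast_zmod_val, add_sub_cancel] at this

lemma desc_pos (f : ZMod n → ℕ) (hf : ∀ i, f i ≤ 1) {a b : ZMod n}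
    (ha : f a = 1) (hb : f b = 0) : 1 ≤ desc f := by
  by_contra h
  have h0 : desc f = 0 := by omega
  have hterm : ∀ i, f i * (1 - f (i + 1)) = 0 := by
    intro i
    exact (Finset.sum_eq_zero_iff.mp h0) i (Finset.mem_univ i)
  have hstep : ∀ i, f i = 1 → f (i + 1) = 1 := by
    intro i h1
    have := hterm i
    rw [h1, one_mul] at this
    have := hf (i + 1); omega
  have := reach f hstep ha b
  omega

lemma desc_zero_const (f : ZMod n → ℕ) (hf : ∀ i, f i ≤ 1) (h0 : desc f = 0) :
    (∀ j, f j = 1) ∨ (∀ j, f j = 0) := by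
  by_cases h : ∃ a, f a = 1
  · obtain ⟨a, ha⟩ := h
    left
    intro j
    by_contra hj
    have hj0 : f j = 0 := by have := hf j; omega
    have := desc_pos f hf ha hj0
    omega
  · right
    intro j
    have := hf j
    rcases Nat.lt_or_ge (f j) 1 with h1 | h1
    · omega
    · exact absurd ⟨j, by omega⟩ h

lemma sum_zmod (h : ZMod n → ℕ) : ∑ x : ZMod n, h x = ∑ t ∈ Finset.range n, h (t : ZMod n) := by
  refine Finset.sum_nbij' (fun x => x.val) (fun t => (t : ZMod n)) ?_ ?_ ?_ ?_ ?_
  · intro a _; exact Finset.mem_range.mpr (ZMod.val_lt a)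
  · intro a _; exact Finset.mem_univ _
  · intro a _; exact ZMod.natCast_zmod_val a
  · intro a ha; exact ZMod.val_cast_of_lt (Finset.mem_range.mp ha)
  · intro a _; rw [ZMod.natCast_zmod_val]

lemma desc_one_interval (f : ZMod n → ℕ) (hf : ∀ i, f i ≤ 1) (m : ℕ)
    (hm : 0 < m) (hmn : m < n) (hsum : ∑ i, f i = m) (hd : desc f = 1) :
    ∃ k : ZMod n, ∀ x, f x = if (x - k).val < m then 1 else 0 := by
  -- the unique descent
  obtain ⟨i, -, hi⟩ := Finset.exists_ne_zero_of_sum_ne_zero (s := Finset.univ)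
    (f := fun i => f i * (1 - f (i + 1))) (by rw [← desc, hd]; exact one_ne_zero)
  have hfi : f i = 1 := by
    have := hf i
    rcases Nat.eq_zero_or_pos (f i) with h | h <;> simp [h] at hi ⊢ <;> omega
  have hfi1 : f (i + 1) = 0 := by have := hf (i + 1); by_contra h; simp [hfi] at hi; omega
  have huniq : ∀ i', f i' = 1 → f (i' + 1) = 0 → i' = i := by
    intro i' h1 h2
    by_contra hne
    have hsub : ∑ x ∈ ({i', i} : Finset (ZMod n)), f x * (1 - f (x + 1)) ≤ desc f :=
      Finset.sum_le_sum_of_subset (Finset.subset_univ _)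
    rw [Finset.sum_pair hne, h1, h2, hfi, hfi1, hd] at hsub
    omega
  -- the unique ascent
  have ha := asc_eq f hf
  rw [hd] at ha
  obtain ⟨j, -, hj⟩ := Finset.exists_ne_zero_of_sum_ne_zero (s := Finset.univ)
    (f := fun j => (1 - f j) * f (j + 1)) (by rw [ha]; exact one_ne_zero)
  have hfj : f j = 0 := by
    have := hf j; by_contra h
    have : f j = 1 := by omega
    simp [this] at hj
  have hfj1 : f (j + 1) = 1 := by
    have := hf (j + 1); by_contra h
    have : f (j + 1) = 0 := by omega
    simp [this] at hj
  have huniqA : ∀ j', f j' = 0 → f (j' + 1) = 1 → j' = j := by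
    intro j' h1 h2
    by_contra hne
    have hsub : ∑ x ∈ ({j', j} : Finset (ZMod n)), (1 - f x) * f (x + 1) ≤ 1 := by
      have h := Finset.sum_le_sum_of_subset (f := fun x => (1 - f x) * f (x + 1))
        (Finset.subset_univ ({j', j} : Finset (ZMod n)))
      rwa [ha] at h
    rw [Finset.sum_pair hne, h1, h2, hfj, hfj1] at hsub
    omega
  set k : ZMod n := j + 1 with hk
  set d : ℕ := (i - k).val with hdd
  have hdn : d < n := ZMod.val_lt _
  have hkd : k + (d : ZMod n) = i := by
    rw [hdd, ZMod.natCast_zmod_val]; ring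
  have claimA : ∀ t : ℕ, t ≤ d → f (k + (t : ZMod n)) = 1 := by
    intro t
    induction t with
    | zero => intro _; simpa using hfj1
    | succ t ih =>
      intro ht
      have h1 : f (k + (t : ZMod n)) = 1 := ih (by omega)
      have hcast : ((t + 1 : ℕ) : ZMod n) = (t : ZMod n) + 1 := by push_cast; ring
      rw [hcast, ← add_assoc]
      by_contra hc
      have h0 : f (k + (t : ZMod n) + 1) = 0 := by have := hf (k + (t : ZMod n) + 1); omega
      have heq := huniq _ h1 h0
      have h2 : ((t : ℕ) : ZMod n) = i - k := by rw [← heq]; ring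
      have : d = t := by rw [hdd, ← h2, ZMod.val_cast_of_lt (by omega)]
      omega
  have claimB : ∀ t : ℕ, d < t → t < n → f (k + (t : ZMod n)) = 0 := by
    intro t
    induction t with
    | zero => omega
    | succ t ih =>
      intro hdt htn
      have hcast : ((t + 1 : ℕ) : ZMod n) = (t : ZMod n) + 1 := by push_cast; ring
      rcases Nat.lt_or_ge d t with h | h
      · have h0 : f (k + (t : ZMod n)) = 0 := ih h (by omega)
        rw [hcast, ← add_assoc]
        by_contra hc
        have h1 : f (k + (t : ZMod n) + 1) = 1 := by have := hf (k + (t : ZMod n) + 1); omega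
        have heq := huniqA _ h0 h1
        have hz : ((t + 1 : ℕ) : ZMod n) = 0 := by
          push_cast
          have h3 : k + (t : ZMod n) + 1 = j + 1 := by rw [heq]
          linear_combination h3 - hk
        have hdvd := (ZMod.natCast_eq_zero_iff (t + 1) n).mp hz
        have := Nat.le_of_dvd (by omega) hdvd
        omega
      · have hteq : t = d := by omega
        subst hteq
        rw [hcast, ← add_assoc, hkd]
        exact hfi1
  -- compute the sum
  have hs : (m : ℕ) = d + 1 := by
    have e1 : ∑ x : ZMod n, f (k + x) = ∑ x : ZMod n, f x :=
      Fintype.sum_equiv (Equiv.addLeft k) _ _ (fun _ => rfl)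
    have e2 : ∑ x : ZMod n, f (k + x) = ∑ t ∈ Finset.range n, f (k + (t : ZMod n)) :=
      sum_zmod (fun x => f (k + x))
    have e3 : ∑ t ∈ Finset.range n, f (k + (t : ZMod n))
        = ∑ t ∈ Finset.range n, (if t ≤ d then 1 else 0) := by
      refine Finset.sum_congr rfl fun t ht => ?_
      have htn := Finset.mem_range.mp ht
      split_ifs with h
      · exact claimA t h
      · exact claimB t (by omega) htn
    have e4 : ∑ t ∈ Finset.range n, (if t ≤ d then 1 else 0) = d + 1 := by
      rw [← Finset.sum_filter]
      have : (Finset.range n).filter (fun t => t ≤ d) = Finset.range (d + 1) := by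
        ext t; simp [Finset.mem_filter, Finset.mem_range]; omega
      rw [this, Finset.sum_const, Finset.card_range, smul_eq_mul, mul_one]
    omega
  refine ⟨k, fun x => ?_⟩
  have hx : x = k + (((x - k).val : ℕ) : ZMod n) := by
    rw [ZMod.natCast_zmod_val]; ring
  have hvx : (x - k).val < n := ZMod.val_lt _
  split_ifs with h
  · rw [hx]; exact claimA _ (by omega)
  · rw [hx]; exact claimB _ (by omega) hvx

lemma desc_const (c : ℕ) : desc (fun _ : ZMod n => c) = 0 := by
  simp only [desc, Finset.sum_eq_zero_iff, Finset.mem_univ, Nat.mul_eq_zero]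
  intro _ _
  omega

lemma desc_interval (k : ZMod n) (m : ℕ) (hm : 0 < m) (hmn : m < n) :
    desc (fun x : ZMod n => if (x - k).val < m then 1 else 0) = 1 := by
  haveI : Fact (1 < n) := ⟨by omega⟩
  have key : ∀ x : ZMod n,
      (if (x - k).val < m then 1 else 0) * (1 - if (x + 1 - k).val < m then 1 else 0)
      = if x = k + ((m - 1 : ℕ) : ZMod n) then 1 else 0 := by
    intro x
    have hx1 : (x + 1 - k) = (x - k) + 1 := by ring
    have hv : (x + 1 - k).val = ((x - k).val + 1) % n := by
      rw [hx1, ZMod.val_add, ZMod.val_one]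
    set a := (x - k).val with ha
    have han : a < n := ZMod.val_lt _
    have hmod : (a + 1) % n = a + 1 ∨ (a + 1 = n ∧ (a + 1) % n = 0) := by
      rcases Nat.lt_or_ge (a + 1) n with h | h
      · exact Or.inl (Nat.mod_eq_of_lt h)
      · refine Or.inr ⟨by omega, ?_⟩
        have : a + 1 = n := by omega
        rw [this, Nat.mod_self]
    have hiff : (x = k + ((m - 1 : ℕ) : ZMod n)) ↔ a = m - 1 := by
      constructor
      · intro h
        rw [ha, h, add_sub_cancel_left, ZMod.val_cast_of_lt (by omega)]
      · intro h
        have hxk : x - k = ((m - 1 : ℕ) : ZMod n) := by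
          rw [← ZMod.natCast_zmod_val (x - k), ← ha, h]
        linear_combination hxk
    by_cases hx : x = k + ((m - 1 : ℕ) : ZMod n)
    · have ham : a = m - 1 := hiff.mp hx
      have c1 : a < m := by omega
      have c2 : ¬((a + 1) % n < m) := by omega
      rw [hv, if_pos c1, if_neg c2, if_pos hx]
    · have ham : a ≠ m - 1 := fun h => hx (hiff.mpr h)
      rw [hv, if_neg hx]
      by_cases c1 : a < m
      · have c2 : (a + 1) % n < m := by omega
        rw [if_pos c1, if_pos c2]
      · rw [if_neg c1, zero_mul]
  rw [desc, Finset.sum_congr rfl (fun x _ => key x)]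
  simp

lemma card_le_sum {α : Type*} [Fintype α] (S : Finset α) (g : α → ℕ)
    (h : ∀ a ∈ S, 1 ≤ g a) : S.card ≤ ∑ a, g a :=
  calc S.card = ∑ _a ∈ S, 1 := by simp
  _ ≤ ∑ a ∈ S, g a := Finset.sum_le_sum h
  _ ≤ ∑ a, g a := Finset.sum_le_sum_of_subset (Finset.subset_univ S)

section Main

variable (K L N₀ : ℕ) [NeZero K] [NeZero L]

/-- Total number of horizontal descents (over rows). -/
def Dh (η : ZMod K × ZMod L → ℕ) : ℕ := ∑ j : ZMod L, desc (fun i => η (i, j))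

/-- Total number of vertical descents (over columns). -/
def Dv (η : ZMod K × ZMod L → ℕ) : ℕ := ∑ i : ZMod K, desc (fun j => η (i, j))

lemma ham_eq (η : ZMod K × ZMod L → ℕ) (hle : ∀ x, η x ≤ 1)
    (hnum : ∑ x : ZMod K × ZMod L, η x = L * N₀) :
    Ham K L η = -(2 * ((L : ℝ) * N₀)) + ((Dh K L η + Dv K L η : ℕ) : ℝ) := by
  have hsum' : ∑ i : ZMod K, ∑ j : ZMod L, η (i, j) = L * N₀ := by
    rw [← hnum, Fintype.sum_prod_type]
  have hsum'' : ∑ j : ZMod L, ∑ i : ZMod K, η (i, j) = L * N₀ := by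
    rw [← hsum', Finset.sum_comm]
  have hEh : (∑ x : ZMod K × ZMod L, η x * η (x + (1, 0))) + Dh K L η = L * N₀ := by
    have h1 : ∑ x : ZMod K × ZMod L, η x * η (x + (1, 0))
        = ∑ j : ZMod L, ∑ i : ZMod K, η (i, j) * η (i + 1, j) := by
      rw [Fintype.sum_prod_type, Finset.sum_comm]
      refine Finset.sum_congr rfl fun j _ => Finset.sum_congr rfl fun i _ => ?_
      congr 2
      show (i, j) + (1, 0) = (i + 1, j)
      simp [Prod.ext_iff]
    rw [h1, Dh, ← Finset.sum_add_distrib, ← hsum'']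
    exact Finset.sum_congr rfl fun j _ => desc_add (fun i => η (i, j)) (fun i => hle _)
  have hEv : (∑ x : ZMod K × ZMod L, η x * η (x + (0, 1))) + Dv K L η = L * N₀ := by
    have h1 : ∑ x : ZMod K × ZMod L, η x * η (x + (0, 1))
        = ∑ i : ZMod K, ∑ j : ZMod L, η (i, j) * η (i, j + 1) := by
      rw [Fintype.sum_prod_type]
      refine Finset.sum_congr rfl fun i _ => Finset.sum_congr rfl fun j _ => ?_
      congr 2
      show (i, j) + (0, 1) = (i, j + 1)
      simp [Prod.ext_iff]
    rw [h1, Dv, ← Finset.sum_add_distrib, ← hsum']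
    exact Finset.sum_congr rfl fun i _ => desc_add (fun j => η (i, j)) (fun j => hle _)
  have c1 : (∑ x : ZMod K × ZMod L, (η x : ℝ) * (η (x + (1, 0)) : ℝ))
      = ((∑ x : ZMod K × ZMod L, η x * η (x + (1, 0)) : ℕ) : ℝ) := by push_cast; rfl
  have c2 : (∑ x : ZMod K × ZMod L, (η x : ℝ) * (η (x + (0, 1)) : ℝ))
      = ((∑ x : ZMod K × ZMod L, η x * η (x + (0, 1)) : ℕ) : ℝ) := by push_cast; rfl
  rw [Ham, c1, c2]
  have e1 := congrArg (Nat.cast : ℕ → ℝ) hEh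
  have e2 := congrArg (Nat.cast : ℕ → ℝ) hEv
  push_cast at e1 e2 ⊢
  linarith

lemma Dh_strip (k : ZMod K) (h0 : 0 < N₀) (hNK : N₀ < K) :
    Dh K L (strip K L N₀ k) = L := by
  rw [Dh]
  have h : ∀ j : ZMod L, desc (fun i => strip K L N₀ k (i, j)) = 1 := fun j =>
    desc_interval k N₀ h0 hNK
  rw [Finset.sum_congr rfl fun j _ => h j, Finset.sum_const, Finset.card_univ, ZMod.card,
    smul_eq_mul, mul_one]

lemma Dv_strip (k : ZMod K) : Dv K L (strip K L N₀ k) = 0 := by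
  rw [Dv]
  refine Finset.sum_eq_zero fun i _ => ?_
  show desc (fun _ : ZMod L => if (i - k).val < N₀ then 1 else 0) = 0
  exact desc_const _

lemma core (hKL : L < K) (hlow : L < 4 * N₀) (hhigh : 2 * N₀ < K)
    (η : ZMod K × ZMod L → ℕ)
    (hval : ∀ x, η x = 0 ∨ η x = 1)
    (hnum : ∑ x : ZMod K × ZMod L, η x = L * N₀) :
    ((∃ k, η = strip K L N₀ k) ∧ Dh K L η + Dv K L η = L) ∨
      L + 1 ≤ Dh K L η + Dv K L η := by
  classical
  have hL : 0 < L := Nat.pos_of_ne_zero (NeZero.ne L)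
  have hK : 0 < K := Nat.pos_of_ne_zero (NeZero.ne K)
  have hN : 0 < N₀ := by omega
  have hNK : N₀ < K := by omega
  have hle : ∀ x, η x ≤ 1 := fun x => by rcases hval x with h | h <;> omega
  have cardL : Fintype.card (ZMod L) = L := ZMod.card L
  have cardK : Fintype.card (ZMod K) = K := ZMod.card K
  have hsum' : ∑ i : ZMod K, ∑ j : ZMod L, η (i, j) = L * N₀ := by
    rw [← hnum, Fintype.sum_prod_type]
  have hsum'' : ∑ j : ZMod L, ∑ i : ZMod K, η (i, j) = L * N₀ := by
    rw [← hsum', Finset.sum_comm]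
  by_cases h1 : ∃ j0 : ZMod L, ∀ i, η (i, j0) = 1
  · obtain ⟨j0, hj0⟩ := h1
    by_cases h0 : ∃ j1 : ZMod L, ∀ i, η (i, j1) = 0
    · -- both a full row and an empty row: every column is nonconstant
      right
      obtain ⟨j1, hj1⟩ := h0
      have hcol : ∀ i : ZMod K, 1 ≤ desc (fun j => η (i, j)) := fun i =>
        desc_pos _ (fun j => hle _) (hj0 i) (hj1 i)
      have hDv : K ≤ Dv K L η := by
        rw [Dv]
        have := card_le_sum (Finset.univ : Finset (ZMod K))
          (fun i => desc (fun j => η (i, j))) (fun i _ => hcol i)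
        rwa [Finset.card_univ, cardK] at this
      omega
    · right
      push_neg at h0
      set R1 := Finset.univ.filter (fun j : ZMod L => ∀ i, η (i, j) = 1) with hR1
      set R1c := Finset.univ.filter (fun j : ZMod L => ¬ ∀ i, η (i, j) = 1) with hR1c
      set C1 := Finset.univ.filter (fun i : ZMod K => ∀ j, η (i, j) = 1) with hC1
      set C1c := Finset.univ.filter (fun i : ZMod K => ¬ ∀ j, η (i, j) = 1) with hC1c
      have hcardR : R1.card + R1c.card = L := by
        rw [hR1, hR1c, Finset.card_filter_add_card_filter_not, Finset.card_univ, cardL]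
      have hcardC : C1.card + C1c.card = K := by
        rw [hC1, hC1c, Finset.card_filter_add_card_filter_not, Finset.card_univ, cardK]
      have hDh : R1c.card ≤ Dh K L η := by
        rw [Dh]
        refine card_le_sum _ _ fun j hj => ?_
        have hj' := (Finset.mem_filter.mp hj).2
        push_neg at hj'
        obtain ⟨i1, hi1⟩ := hj'
        have hi1' : η (i1, j) = 0 := by rcases hval (i1, j) with h | h <;> omega
        obtain ⟨i2, hi2⟩ := h0 j
        have hi2' : η (i2, j) = 1 := by rcases hval (i2, j) with h | h <;> omega
        exact desc_pos _ (fun i => hle _) hi2' hi1'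
      have hDv : C1c.card ≤ Dv K L η := by
        rw [Dv]
        refine card_le_sum _ _ fun i hi => ?_
        have hi' := (Finset.mem_filter.mp hi).2
        push_neg at hi'
        obtain ⟨j1, hj1⟩ := hi'
        have hj1' : η (i, j1) = 0 := by rcases hval (i, j1) with h | h <;> omega
        exact desc_pos _ (fun j => hle _) (hj0 i) hj1'
      -- counting: R1.card * K ≤ L * N₀ and C1.card * L ≤ L * N₀
      have hr1count : R1.card * K ≤ L * N₀ := by
        have e : ∑ j ∈ R1, ∑ i : ZMod K, η (i, j) = R1.card * K := by
          rw [Finset.sum_congr rfl (fun j hj => ?_)]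
          · rw [Finset.sum_const, smul_eq_mul]
          · have := (Finset.mem_filter.mp hj).2
            rw [Finset.sum_congr rfl fun i _ => this i, Finset.sum_const, Finset.card_univ,
              cardK, smul_eq_mul, mul_one]
        calc R1.card * K = ∑ j ∈ R1, ∑ i : ZMod K, η (i, j) := e.symm
          _ ≤ ∑ j : ZMod L, ∑ i : ZMod K, η (i, j) :=
              Finset.sum_le_sum_of_subset (Finset.subset_univ _)
          _ = L * N₀ := hsum''
      have hc1count : C1.card * L ≤ L * N₀ := by
        have e : ∑ i ∈ C1, ∑ j : ZMod L, η (i, j) = C1.card * L := by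
          rw [Finset.sum_congr rfl (fun i hi => ?_)]
          · rw [Finset.sum_const, smul_eq_mul]
          · have := (Finset.mem_filter.mp hi).2
            rw [Finset.sum_congr rfl fun j _ => this j, Finset.sum_const, Finset.card_univ,
              cardL, smul_eq_mul, mul_one]
        calc C1.card * L = ∑ i ∈ C1, ∑ j : ZMod L, η (i, j) := e.symm
          _ ≤ ∑ i : ZMod K, ∑ j : ZMod L, η (i, j) :=
              Finset.sum_le_sum_of_subset (Finset.subset_univ _)
          _ = L * N₀ := hsum'
      have hr1 : R1.card < N₀ := by
        by_contra hcon
        push_neg at hcon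
        have : N₀ * K ≤ R1.card * K := Nat.mul_le_mul_right K hcon
        have : L * N₀ < N₀ * K := by
          calc L * N₀ = N₀ * L := Nat.mul_comm _ _
            _ < N₀ * K := (Nat.mul_lt_mul_left hN).mpr hKL
        omega
      have hc1 : C1.card ≤ N₀ := by
        by_contra hcon
        push_neg at hcon
        have : (N₀ + 1) * L ≤ C1.card * L := Nat.mul_le_mul_right L hcon
        have : L * N₀ < (N₀ + 1) * L := by
          calc L * N₀ = N₀ * L := Nat.mul_comm _ _
            _ < (N₀ + 1) * L := (Nat.mul_lt_mul_right hL).mpr (by omega)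
        omega
      omega
  · by_cases h0 : ∃ j1 : ZMod L, ∀ i, η (i, j1) = 0
    · -- an empty row but no full row
      right
      obtain ⟨j1, hj1⟩ := h0
      push_neg at h1
      set T := Finset.univ.filter (fun j : ZMod L => ¬ ∀ i, η (i, j) = 0) with hT
      set B := Finset.univ.filter (fun i : ZMod K => ¬ ∀ j, η (i, j) = 0) with hB
      have hDh : T.card ≤ Dh K L η := by
        rw [Dh]
        refine card_le_sum _ _ fun j hj => ?_
        have hj' := (Finset.mem_filter.mp hj).2
        push_neg at hj'
        obtain ⟨i1, hi1⟩ := hj'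
        have hi1' : η (i1, j) = 1 := by rcases hval (i1, j) with h | h <;> omega
        obtain ⟨i2, hi2⟩ := h1 j
        have hi2' : η (i2, j) = 0 := by rcases hval (i2, j) with h | h <;> omega
        exact desc_pos _ (fun i => hle _) hi1' hi2'
      have hDv : B.card ≤ Dv K L η := by
        rw [Dv]
        refine card_le_sum _ _ fun i hi => ?_
        have hi' := (Finset.mem_filter.mp hi).2
        push_neg at hi'
        obtain ⟨j2, hj2⟩ := hi'
        have hj2' : η (i, j2) = 1 := by rcases hval (i, j2) with h | h <;> omega
        exact desc_pos _ (fun j => hle _) hj2' (hj1 i)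
      -- counting: L * N₀ ≤ B.card * T.card
      have hcount : L * N₀ ≤ B.card * T.card := by
        have e1 : ∑ i ∈ B, ∑ j : ZMod L, η (i, j) = L * N₀ := by
          rw [← hsum']
          refine Finset.sum_subset (Finset.subset_univ _) fun i _ hi => ?_
          rw [hB] at hi
          simp only [Finset.mem_filter, Finset.mem_univ, true_and, not_not] at hi
          exact Finset.sum_eq_zero fun j _ => hi j
        have e2 : ∀ i, ∑ j : ZMod L, η (i, j) ≤ T.card := by
          intro i
          have e3 : ∑ j : ZMod L, η (i, j) = ∑ j ∈ T, η (i, j) := by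
            refine (Finset.sum_subset (Finset.subset_univ _) fun j _ hj => ?_).symm
            rw [hT] at hj
            simp only [Finset.mem_filter, Finset.mem_univ, true_and, not_not] at hj
            exact hj i
          rw [e3]
          have := Finset.sum_le_card_nsmul T (fun j => η (i, j)) 1 (fun j _ => hle _)
          simpa using this
        calc L * N₀ = ∑ i ∈ B, ∑ j : ZMod L, η (i, j) := e1.symm
          _ ≤ ∑ _i ∈ B, T.card := Finset.sum_le_sum fun i _ => e2 i
          _ = B.card * T.card := by rw [Finset.sum_const, smul_eq_mul]
      -- quadratic estimate: T.card + B.card ≥ L + 1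
      have hmain : L + 1 ≤ T.card + B.card := by
        by_contra hcon
        push_neg at hcon
        have hbt : B.card + T.card ≤ L := by omega
        have k1 : 4 * (B.card * T.card) ≤ (B.card + T.card) * (B.card + T.card) := by
          nlinarith [Nat.le_total B.card T.card, sq_nonneg ((B.card : ℤ) - T.card)]
        have k2 : (B.card + T.card) * (B.card + T.card) ≤ L * L :=
          Nat.mul_le_mul hbt hbt
        have k3 : L * L < L * (4 * N₀) := (Nat.mul_lt_mul_left hL).mpr hlow
        have k4 : 4 * (L * N₀) ≤ 4 * (B.card * T.card) := by omega
        have : L * (4 * N₀) = 4 * (L * N₀) := by ring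
        omega
      omega
    · -- no constant rows at all
      push_neg at h1
      push_neg at h0
      have hrow1 : ∀ j, ∃ i, η (i, j) = 1 := by
        intro j
        obtain ⟨i, hi⟩ := h0 j
        exact ⟨i, by rcases hval (i, j) with h | h <;> omega⟩
      have hrow0 : ∀ j, ∃ i, η (i, j) = 0 := by
        intro j
        obtain ⟨i, hi⟩ := h1 j
        exact ⟨i, by rcases hval (i, j) with h | h <;> omega⟩
      have hDh : L ≤ Dh K L η := by
        rw [Dh]
        have := card_le_sum (Finset.univ : Finset (ZMod L))
          (fun j => desc (fun i => η (i, j))) (fun j _ => ?_)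
        · rwa [Finset.card_univ, cardL] at this
        · obtain ⟨i1, hi1⟩ := hrow1 j
          obtain ⟨i0, hi0⟩ := hrow0 j
          exact desc_pos _ (fun i => hle _) hi1 hi0
      by_cases hdv : Dv K L η = 0
      · -- all columns constant
        have hcol : ∀ i : ZMod K, desc (fun j => η (i, j)) = 0 := by
          intro i
          exact (Finset.sum_eq_zero_iff.mp hdv) i (Finset.mem_univ i)
        have hconst : ∀ i (j : ZMod L), η (i, j) = η (i, 0) := by
          intro i j
          rcases desc_zero_const (fun j => η (i, j)) (fun _ => hle _) (hcol i) with h | h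
          · rw [h j, h 0]
          · rw [h j, h 0]
        set g : ZMod K → ℕ := fun i => η (i, 0) with hgdef
        have hgle : ∀ i, g i ≤ 1 := fun i => hle _
        have hsumg : ∑ i, g i = N₀ := by
          have e : ∑ i : ZMod K, ∑ j : ZMod L, η (i, j) = L * ∑ i, g i := by
            rw [Finset.mul_sum]
            refine Finset.sum_congr rfl fun i _ => ?_
            rw [Finset.sum_congr rfl fun j _ => hconst i j, Finset.sum_const,
              Finset.card_univ, cardL, smul_eq_mul]
          rw [e] at hsum'
          exact (Nat.eq_of_mul_eq_mul_left hL hsum'.symm).symm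
        have hdg : 1 ≤ desc g := by
          obtain ⟨i1, hi1⟩ := hrow1 0
          obtain ⟨i0, hi0⟩ := hrow0 0
          exact desc_pos g hgle hi1 hi0
        have hDh' : Dh K L η = L * desc g := by
          rw [Dh]
          have e : ∀ j : ZMod L, desc (fun i => η (i, j)) = desc g := by
            intro j
            congr 1
            funext i
            exact hconst i j
          rw [Finset.sum_congr rfl fun j _ => e j, Finset.sum_const, Finset.card_univ,
            cardL, smul_eq_mul]
        rcases Nat.lt_or_ge (desc g) 2 with hd1 | hd2
        · have hdg1 : desc g = 1 := by omega
          left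
          obtain ⟨k, hk⟩ := desc_one_interval g hgle N₀ hN hNK hsumg hdg1
          refine ⟨⟨k, funext fun x => ?_⟩, by rw [hDh', hdg1, hdv, mul_one, add_zero]⟩
          calc η x = η (x.1, x.2) := rfl
            _ = g x.1 := hconst x.1 x.2
            _ = if (x.1 - k).val < N₀ then 1 else 0 := hk x.1
            _ = strip K L N₀ k x := rfl
        · right
          have h2L : L * 2 ≤ L * desc g := Nat.mul_le_mul_left L hd2
          omega
      · right
        omega

end Main

end GroundStateAux

open GroundStateAux in
/-- `H(η) ≥ −2LN₀ + L` with equality iff `η` is a strip `σᵏ`. -/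
theorem ground_states (K L N₀ : ℕ) [NeZero K] [NeZero L]
    (hKL : L < K) (hlow : L < 4 * N₀) (hhigh : 2 * N₀ < K)
    (η : ZMod K × ZMod L → ℕ)
    (hval : ∀ x, η x = 0 ∨ η x = 1)
    (hnum : ∑ x : ZMod K × ZMod L, η x = L * N₀) :
    -2 * ((L : ℝ) * N₀) + L ≤ Ham K L η ∧
      (Ham K L η = -2 * ((L : ℝ) * N₀) + L ↔ ∃ k : ZMod K, η = strip K L N₀ k) := by
  have hL : 0 < L := Nat.pos_of_ne_zero (NeZero.ne L)
  have hN : 0 < N₀ := by omega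
  have hNK : N₀ < K := by omega
  have hle : ∀ x, η x ≤ 1 := fun x => by rcases hval x with h | h <;> omega
  have hham := ham_eq K L N₀ η hle hnum
  have hcore := core K L N₀ hKL hlow hhigh η hval hnum
  have hDL : L ≤ Dh K L η + Dv K L η := by rcases hcore with ⟨-, h⟩ | h <;> omega
  constructor
  · rw [hham]
    have : (L : ℝ) ≤ ((Dh K L η + Dv K L η : ℕ) : ℝ) := by exact_mod_cast hDL
    linarith
  · constructor
    · intro he
      rw [hham] at he
      have hD : ((Dh K L η + Dv K L η : ℕ) : ℝ) = L := by linarith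
      have hDn : Dh K L η + Dv K L η = L := by exact_mod_cast hD
      rcases hcore with ⟨⟨k, hk⟩, -⟩ | h
      · exact ⟨k, hk⟩
      · omega
    · rintro ⟨k, rfl⟩
      rw [hham, Dh_strip K L N₀ k hN hNK, Dv_strip K L N₀ k]
      push_cast
      ring
end

section
/- In the Kawasaki dynamics energy landscape for the Ising lattice gas on the K×L torus (K > L, L/4 < N₀ < K/2), the communication height between any two distinct ground states σᵏ and σᵏ' satisfies Φ(σᵏ, σᵏ') ≤ H₀ + 4, where H₀ = −2LN₀ + L; i.e., there exists a path of Kawasaki moves (nearest-neighbor particle exchanges) from σᵏ to σᵏ' along which the Hamiltonian never exceeds H₀ + 4. -/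
/-- Kawasaki adjacency: two configurations related by exchanging the values at two
nearest-neighbor sites of the torus. -/
def kawAdj (K L : ℕ) [NeZero K] [NeZero L] (η ξ : ZMod K × ZMod L → ℕ) : Prop :=
  η ≠ ξ ∧ ∃ x y : ZMod K × ZMod L,
    (y = x + (1, 0) ∨ y = x + (0, 1) ∨ x = y + (1, 0) ∨ x = y + (0, 1)) ∧
      ξ = Function.update (Function.update η x (η y)) y (η x)

set_option linter.unusedSectionVars false
set_option maxHeartbeats 1000000

namespace StripAux



/-- interval indicator: columns b, b+1, ..., b+N₀-1 -/
def Ival (K N₀ : ℕ) [NeZero K] (b c : ZMod K) : ℕ :=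
  if (c - b).val < N₀ then 1 else 0

/-- broken row: middle interval b+1..b+N₀-1 plus a lone particle at w -/
def Tval (K N₀ : ℕ) [NeZero K] (b w c : ZMod K) : ℕ :=
  if c = w then 1 else if (c - (b + 1)).val < N₀ - 1 then 1 else 0

def Pconf (K L N₀ : ℕ) [NeZero K] [NeZero L] (b : ZMod K) (j : ℕ) :
    ZMod K × ZMod L → ℕ :=
  fun x => if x.2.val < j then Ival K N₀ (b + 1) x.1 else Ival K N₀ b x.1

def Qconf (K L N₀ : ℕ) [NeZero K] [NeZero L] (b : ZMod K) (j : ℕ) (w : ZMod K) :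
    ZMod K × ZMod L → ℕ :=
  fun x => if x.2.val < j then Ival K N₀ (b + 1) x.1
    else if x.2.val = j then Tval K N₀ b w x.1 else Ival K N₀ b x.1

def Fnat (K L : ℕ) [NeZero K] [NeZero L] (η : ZMod K × ZMod L → ℕ) : ℕ :=
  (∑ x : ZMod K × ZMod L, η x * η (x + (1, 0))) +
    (∑ x : ZMod K × ZMod L, η x * η (x + (0, 1)))

lemma val_sub_one {K : ℕ} [NeZero K] (z : ZMod K) (hz : z ≠ 0) :
    (z - 1).val = z.val - 1 := by
  have h1 : 1 ≤ z.val := Nat.pos_of_ne_zero (fun h => hz ((ZMod.val_eq_zero z).1 h))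
  have hlt : z.val - 1 < K := lt_of_le_of_lt (Nat.sub_le _ _) (ZMod.val_lt z)
  have : z - 1 = ((z.val - 1 : ℕ) : ZMod K) := by
    conv_lhs => rw [← ZMod.natCast_rightInverse z]
    push_cast [Nat.cast_sub h1]
    ring
  rw [this, ZMod.val_cast_of_lt hlt]

lemma le_sum_of_pts {K : ℕ} [NeZero K] (b : ZMod K) (n : ℕ) (hn : n ≤ K)
    (f : ZMod K → ℕ) (h : ∀ t, t < n → 1 ≤ f (b + (t : ZMod K))) :
    n ≤ ∑ c : ZMod K, f c := by
  classical
  have hinj : Set.InjOn (fun t : ℕ => b + (t : ZMod K)) (Finset.range n) := by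
    intro t1 h1 t2 h2 he
    simp only [Finset.coe_range, Set.mem_Iio] at h1 h2
    have h3 : (t1 : ZMod K) = t2 := by
      have := he; simpa using this
    have := congrArg ZMod.val h3
    rwa [ZMod.val_cast_of_lt (lt_of_lt_of_le h1 hn),
      ZMod.val_cast_of_lt (lt_of_lt_of_le h2 hn)] at this
  have hcard : ((Finset.range n).image (fun t : ℕ => b + (t : ZMod K))).card = n := by
    rw [Finset.card_image_of_injOn hinj, Finset.card_range]
  calc n = ∑ _c ∈ (Finset.range n).image (fun t : ℕ => b + (t : ZMod K)), 1 := by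
          rw [Finset.sum_const, hcard, smul_eq_mul, mul_one]
    _ ≤ ∑ c ∈ (Finset.range n).image (fun t : ℕ => b + (t : ZMod K)), f c := by
          refine Finset.sum_le_sum ?_
          intro c hc
          obtain ⟨t, ht, rfl⟩ := Finset.mem_image.1 hc
          exact h t (Finset.mem_range.1 ht)
    _ ≤ ∑ c : ZMod K, f c := Finset.sum_le_sum_of_subset (Finset.subset_univ _)

set_option linter.unusedSectionVars false
section rows
variable {K N₀ : ℕ} [NeZero K] (hN : 0 < N₀) (hNK : N₀ < K)

lemma Ival_apply_cast (b : ZMod K) (t : ℕ) (ht : t < K) :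
    Ival K N₀ b (b + (t : ZMod K)) = if t < N₀ then 1 else 0 := by
  rw [Ival, add_sub_cancel_left, ZMod.val_cast_of_lt ht]

include hN hNK

lemma hrow_I (b : ZMod K) :
    N₀ ≤ (∑ c : ZMod K, Ival K N₀ b c * Ival K N₀ b (c + 1)) + 1 := by
  have h := le_sum_of_pts b (N₀ - 1) (by omega)
    (fun c => Ival K N₀ b c * Ival K N₀ b (c + 1)) ?_
  · omega
  · intro t ht
    have h1 : Ival K N₀ b (b + (t : ZMod K)) = 1 := by
      rw [Ival_apply_cast b t (by omega), if_pos (by omega)]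
    have h2 : Ival K N₀ b (b + (t : ZMod K) + 1) = 1 := by
      have : b + (t : ZMod K) + 1 = b + ((t + 1 : ℕ) : ZMod K) := by push_cast; ring
      rw [this, Ival_apply_cast b (t + 1) (by omega), if_pos (by omega)]
    show 1 ≤ Ival K N₀ b (b + (t : ZMod K)) * Ival K N₀ b (b + (t : ZMod K) + 1)
    rw [h1, h2]

lemma orow_II (b : ZMod K) :
    N₀ ≤ ∑ c : ZMod K, Ival K N₀ b c * Ival K N₀ b c := by
  refine le_sum_of_pts b N₀ (by omega) _ ?_
  intro t ht
  show 1 ≤ Ival K N₀ b (b + (t : ZMod K)) * Ival K N₀ b (b + (t : ZMod K))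
  rw [Ival_apply_cast b t (by omega), if_pos ht]

lemma orow_pair (b : ZMod K) (f g : ZMod K → ℕ)
    (hf : ∀ t, t + 1 < N₀ → 1 ≤ f (b + ((t + 1 : ℕ) : ZMod K)))
    (hg : ∀ t, t + 1 < N₀ → 1 ≤ g (b + ((t + 1 : ℕ) : ZMod K))) :
    N₀ ≤ (∑ c : ZMod K, f c * g c) + 1 := by
  have h := le_sum_of_pts (b + 1) (N₀ - 1) (by omega) (fun c => f c * g c) ?_
  · omega
  · intro t ht
    have he : b + 1 + (t : ZMod K) = b + ((t + 1 : ℕ) : ZMod K) := by push_cast; ring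
    rw [he]
    exact Nat.one_le_iff_ne_zero.2 (by
      have := hf t (by omega); have := hg t (by omega); positivity)

lemma gb_I0 (b : ZMod K) : ∀ t, t + 1 < N₀ →
    1 ≤ Ival K N₀ b (b + ((t + 1 : ℕ) : ZMod K)) := by
  intro t ht
  rw [Ival_apply_cast b (t + 1) (by omega), if_pos ht]

lemma gb_I1 (b : ZMod K) : ∀ t, t + 1 < N₀ →
    1 ≤ Ival K N₀ (b + 1) (b + ((t + 1 : ℕ) : ZMod K)) := by
  intro t ht
  have he : b + ((t + 1 : ℕ) : ZMod K) = (b + 1) + (t : ZMod K) := by push_cast; ring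
  rw [he, Ival_apply_cast (b + 1) t (by omega), if_pos (by omega)]

lemma gb_T (b w : ZMod K) : ∀ t, t + 1 < N₀ →
    1 ≤ Tval K N₀ b w (b + ((t + 1 : ℕ) : ZMod K)) := by
  intro t ht
  rw [Tval]
  split
  · omega
  · rw [if_pos]
    have he : b + ((t + 1 : ℕ) : ZMod K) - (b + 1) = ((t : ℕ) : ZMod K) := by
      push_cast; ring
    rw [he, ZMod.val_cast_of_lt (by omega)]
    omega

lemma hrow_T (b w : ZMod K) :
    N₀ ≤ (∑ c : ZMod K, Tval K N₀ b w c * Tval K N₀ b w (c + 1)) + 2 := by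
  rcases Nat.lt_or_ge N₀ 3 with h3 | h3
  · omega
  have h := le_sum_of_pts (b + 1) (N₀ - 2) (by omega)
    (fun c => Tval K N₀ b w c * Tval K N₀ b w (c + 1)) ?_
  · omega
  · intro t ht
    have h1 : 1 ≤ Tval K N₀ b w (b + 1 + (t : ZMod K)) := by
      have he : b + 1 + (t : ZMod K) = b + ((t + 1 : ℕ) : ZMod K) := by push_cast; ring
      rw [he]; exact gb_T hN hNK b w t (by omega)
    have h2 : 1 ≤ Tval K N₀ b w (b + 1 + (t : ZMod K) + 1) := by
      have he : b + 1 + (t : ZMod K) + 1 = b + ((t + 2 : ℕ) : ZMod K) := by push_cast; ring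
      rw [he]
      have h := gb_T hN hNK b w (t + 1) (by omega)
      convert h using 2
    exact Nat.one_le_iff_ne_zero.2 (by positivity)

end rows


section ham
variable (K L : ℕ) [NeZero K] [NeZero L]

lemma Ham_eq_neg_Fnat (η : ZMod K × ZMod L → ℕ) :
    Ham K L η = -(Fnat K L η : ℝ) := by
  rw [Ham, Fnat]
  push_cast
  ring

lemma Fnat_eq (η : ZMod K × ZMod L → ℕ) :
    Fnat K L η = (∑ r : ZMod L, ∑ c : ZMod K, η (c, r) * η (c + 1, r)) +
      (∑ r : ZMod L, ∑ c : ZMod K, η (c, r) * η (c, r + 1)) := by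
  rw [Fnat]
  congr 1
  · rw [Fintype.sum_prod_type, Finset.sum_comm]
    refine Finset.sum_congr rfl fun r _ => Finset.sum_congr rfl fun c _ => ?_
    congr 1
    show η ((c, r) + (1, 0)) = η (c + 1, r)
    congr 1
    simp [Prod.ext_iff]
  · rw [Fintype.sum_prod_type, Finset.sum_comm]
    refine Finset.sum_congr rfl fun r _ => Finset.sum_congr rfl fun c _ => ?_
    congr 1
    show η ((c, r) + (0, 1)) = η (c, r + 1)
    congr 1
    simp [Prod.ext_iff]

variable {K L}

lemma val_succ_of_lt {r : ZMod L} (h : r.val + 1 < L) : (r + 1).val = r.val + 1 := by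
  have : r + 1 = ((r.val + 1 : ℕ) : ZMod L) := by
    conv_lhs => rw [← ZMod.natCast_rightInverse r]
    push_cast; ring
  rw [this, ZMod.val_cast_of_lt h]

lemma sum_ind_le (p : ZMod L → Prop) [DecidablePred p] (s : Finset (ZMod L))
    (hs : ∀ r, p r → r ∈ s) :
    (∑ r : ZMod L, if p r then 1 else 0) ≤ s.card := by
  rw [Finset.sum_boole]
  have : Finset.filter p Finset.univ ⊆ s := fun r hr => hs r (Finset.mem_filter.1 hr).2
  exact_mod_cast Finset.card_le_card this

variable (hN : 0 < N₀) (hNK : N₀ < K)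

lemma hamP {N₀ : ℕ} (hN : 0 < N₀) (hNK : N₀ < K) (b : ZMod K) (j : ℕ) :
    Ham K L (Pconf K L N₀ b j) ≤ (-2 * ((L : ℝ) * N₀) + L) + 4 := by
  classical
  have hL : 0 < L := Nat.pos_of_ne_zero (NeZero.ne L)
  set η := Pconf K L N₀ b j with hη
  -- horizontal bound
  have hrow : ∀ r : ZMod L, N₀ ≤ (∑ c : ZMod K, η (c, r) * η (c + 1, r)) + 1 := by
    intro r
    by_cases hr : r.val < j
    · have : ∀ c : ZMod K, η (c, r) = Ival K N₀ (b + 1) c := by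
        intro c; simp [hη, Pconf, hr]
      simp only [this]
      exact hrow_I hN hNK (b + 1)
    · have : ∀ c : ZMod K, η (c, r) = Ival K N₀ b c := by
        intro c; simp [hη, Pconf, hr]
      simp only [this]
      exact hrow_I hN hNK b
  have hH : L * N₀ ≤ (∑ r : ZMod L, ∑ c : ZMod K, η (c, r) * η (c + 1, r)) + L := by
    calc L * N₀ = ∑ _r : ZMod L, N₀ := by
          rw [Finset.sum_const, Finset.card_univ, ZMod.card, smul_eq_mul]
      _ ≤ ∑ r : ZMod L, ((∑ c : ZMod K, η (c, r) * η (c + 1, r)) + 1) :=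
          Finset.sum_le_sum fun r _ => hrow r
      _ = (∑ r : ZMod L, ∑ c : ZMod K, η (c, r) * η (c + 1, r)) + L := by
          rw [Finset.sum_add_distrib, Finset.sum_const, Finset.card_univ, ZMod.card,
            smul_eq_mul, mul_one]
  -- vertical bound
  have vrow : ∀ r : ZMod L, N₀ ≤ (∑ c : ZMod K, η (c, r) * η (c, r + 1)) +
      (if r.val = j - 1 ∨ r.val = L - 1 then 1 else 0) := by
    intro r
    by_cases hbad : r.val = j - 1 ∨ r.val = L - 1
    · rw [if_pos hbad]
      refine orow_pair hN hNK b _ _ ?_ ?_ <;> intro t ht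
      · by_cases hr : r.val < j
        · simp only [hη, Pconf, hr, if_true]; exact gb_I1 hN hNK b t ht
        · simp only [hη, Pconf, hr, if_false]; exact gb_I0 hN hNK b t ht
      · by_cases hr : (r + 1).val < j
        · simp only [hη, Pconf, hr, if_true]; exact gb_I1 hN hNK b t ht
        · simp only [hη, Pconf, hr, if_false]; exact gb_I0 hN hNK b t ht
    · rw [if_neg hbad]
      push_neg at hbad
      obtain ⟨hb1, hb2⟩ := hbad
      have hrL : r.val + 1 < L := by have := ZMod.val_lt r; omega
      have hsucc : (r + 1).val = r.val + 1 := val_succ_of_lt hrL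
      by_cases hr : r.val < j
      · have hr' : (r + 1).val < j := by omega
        have : ∀ c : ZMod K, η (c, r) * η (c, r + 1) =
            Ival K N₀ (b + 1) c * Ival K N₀ (b + 1) c := by
          intro c; simp [hη, Pconf, hr, hr']
        simp only [this]
        exact orow_II hN hNK (b + 1)
      · have hr' : ¬ (r + 1).val < j := by omega
        have : ∀ c : ZMod K, η (c, r) * η (c, r + 1) =
            Ival K N₀ b c * Ival K N₀ b c := by
          intro c; simp [hη, Pconf, hr, hr']
        simp only [this]
        exact orow_II hN hNK b
  have hV : L * N₀ ≤ (∑ r : ZMod L, ∑ c : ZMod K, η (c, r) * η (c, r + 1)) + 2 := by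
    have hbcard : (∑ r : ZMod L, if r.val = j - 1 ∨ r.val = L - 1 then 1 else 0) ≤ 2 := by
      have h := sum_ind_le (fun r : ZMod L => r.val = j - 1 ∨ r.val = L - 1)
        {((j - 1 : ℕ) : ZMod L), ((L - 1 : ℕ) : ZMod L)} ?_
      · refine le_trans h ?_
        exact le_trans (Finset.card_insert_le _ _) (by simp)
      · intro r hr
        have hm : r = ((j - 1 : ℕ) : ZMod L) ∨ r = ((L - 1 : ℕ) : ZMod L) := by
          rcases hr with hr | hr
          · left; rw [← hr, ZMod.natCast_rightInverse r]
          · right; rw [← hr, ZMod.natCast_rightInverse r]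
        rcases hm with hm | hm <;> simp [hm]
    calc L * N₀ = ∑ _r : ZMod L, N₀ := by
          rw [Finset.sum_const, Finset.card_univ, ZMod.card, smul_eq_mul]
      _ ≤ ∑ r : ZMod L, ((∑ c : ZMod K, η (c, r) * η (c, r + 1)) +
            (if r.val = j - 1 ∨ r.val = L - 1 then 1 else 0)) :=
          Finset.sum_le_sum fun r _ => vrow r
      _ = (∑ r : ZMod L, ∑ c : ZMod K, η (c, r) * η (c, r + 1)) +
            (∑ r : ZMod L, if r.val = j - 1 ∨ r.val = L - 1 then 1 else 0) := by
          rw [Finset.sum_add_distrib]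
      _ ≤ _ := by omega
  have key : 2 * (L * N₀) ≤ Fnat K L η + (L + 4) := by
    rw [Fnat_eq]
    omega
  rw [Ham_eq_neg_Fnat]
  have := (Nat.cast_le (α := ℝ)).2 key
  push_cast at this
  linarith

lemma hamQ {N₀ : ℕ} (hN : 0 < N₀) (hNK : N₀ < K) (b w : ZMod K) (j : ℕ) :
    Ham K L (Qconf K L N₀ b j w) ≤ (-2 * ((L : ℝ) * N₀) + L) + 4 := by
  classical
  have hL : 0 < L := Nat.pos_of_ne_zero (NeZero.ne L)
  set η := Qconf K L N₀ b j w with hη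
  -- horizontal bound
  have hrow : ∀ r : ZMod L, N₀ ≤ (∑ c : ZMod K, η (c, r) * η (c + 1, r)) + 1 +
      (if r.val = j then 1 else 0) := by
    intro r
    by_cases hr : r.val < j
    · have hev : ∀ c : ZMod K, η (c, r) = Ival K N₀ (b + 1) c := by
        intro c; simp [hη, Qconf, hr]
      simp only [hev]
      have := hrow_I hN hNK (b + 1)
      omega
    · by_cases hr2 : r.val = j
      · rw [if_pos hr2]
        have hev : ∀ c : ZMod K, η (c, r) = Tval K N₀ b w c := by
          intro c; simp [hη, Qconf, hr, hr2]
        simp only [hev]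
        have := hrow_T hN hNK b w
        omega
      · have hev : ∀ c : ZMod K, η (c, r) = Ival K N₀ b c := by
          intro c; simp [hη, Qconf, hr, hr2]
        simp only [hev]
        have := hrow_I hN hNK b
        omega
  have hH : L * N₀ ≤ (∑ r : ZMod L, ∑ c : ZMod K, η (c, r) * η (c + 1, r)) + (L + 1) := by
    have hbcard : (∑ r : ZMod L, if r.val = j then 1 else 0) ≤ 1 := by
      have h := sum_ind_le (fun r : ZMod L => r.val = j) {((j : ℕ) : ZMod L)} ?_
      · simpa using h
      · intro r hr
        have : r = ((j : ℕ) : ZMod L) := by rw [← hr, ZMod.natCast_rightInverse r]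
        simp [this]
    calc L * N₀ = ∑ _r : ZMod L, N₀ := by
          rw [Finset.sum_const, Finset.card_univ, ZMod.card, smul_eq_mul]
      _ ≤ ∑ r : ZMod L, ((∑ c : ZMod K, η (c, r) * η (c + 1, r)) + 1 +
            (if r.val = j then 1 else 0)) := Finset.sum_le_sum fun r _ => hrow r
      _ ≤ _ := by
          rw [Finset.sum_add_distrib, Finset.sum_add_distrib, Finset.sum_const,
            Finset.card_univ, ZMod.card, smul_eq_mul, mul_one]
          omega
  -- vertical bound
  have gbrow : ∀ r : ZMod L, ∀ t, t + 1 < N₀ → 1 ≤ η ((b + ((t + 1 : ℕ) : ZMod K)), r) := by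
    intro r t ht
    by_cases hr : r.val < j
    · simp only [hη, Qconf, hr, if_true]; exact gb_I1 hN hNK b t ht
    · by_cases hr2 : r.val = j
      · have hev : η ((b + ((t + 1 : ℕ) : ZMod K)), r) = Tval K N₀ b w (b + ((t + 1 : ℕ) : ZMod K)) := by
          simp [hη, Qconf, hr, hr2]
        rw [hev]; exact gb_T hN hNK b w t ht
      · simp only [hη, Qconf, hr, hr2, if_false]; exact gb_I0 hN hNK b t ht
  have vrow : ∀ r : ZMod L, N₀ ≤ (∑ c : ZMod K, η (c, r) * η (c, r + 1)) +
      (if r.val = j - 1 ∨ r.val = j ∨ r.val = L - 1 then 1 else 0) := by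
    intro r
    by_cases hbad : r.val = j - 1 ∨ r.val = j ∨ r.val = L - 1
    · rw [if_pos hbad]
      exact orow_pair hN hNK b _ _ (fun t ht => gbrow r t ht) (fun t ht => gbrow (r + 1) t ht)
    · rw [if_neg hbad]
      push_neg at hbad
      obtain ⟨hb1, hb2, hb3⟩ := hbad
      have hrL : r.val + 1 < L := by have := ZMod.val_lt r; omega
      have hsucc : (r + 1).val = r.val + 1 := val_succ_of_lt hrL
      by_cases hr : r.val < j
      · have hr' : (r + 1).val < j := by omega
        have hev : ∀ c : ZMod K, η (c, r) * η (c, r + 1) =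
            Ival K N₀ (b + 1) c * Ival K N₀ (b + 1) c := by
          intro c; simp [hη, Qconf, hr, hr']
        simp only [hev]
        exact orow_II hN hNK (b + 1)
      · have hr' : ¬ (r + 1).val < j := by omega
        have hr2 : ¬ r.val = j := hb2
        have hr2' : ¬ (r + 1).val = j := by omega
        have hev : ∀ c : ZMod K, η (c, r) * η (c, r + 1) =
            Ival K N₀ b c * Ival K N₀ b c := by
          intro c; simp [hη, Qconf, hr, hr', hr2, hr2']
        simp only [hev]
        exact orow_II hN hNK b
  have hV : L * N₀ ≤ (∑ r : ZMod L, ∑ c : ZMod K, η (c, r) * η (c, r + 1)) + 3 := by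
    have hbcard : (∑ r : ZMod L, if r.val = j - 1 ∨ r.val = j ∨ r.val = L - 1 then 1 else 0) ≤ 3 := by
      have h := sum_ind_le (fun r : ZMod L => r.val = j - 1 ∨ r.val = j ∨ r.val = L - 1)
        {((j - 1 : ℕ) : ZMod L), ((j : ℕ) : ZMod L), ((L - 1 : ℕ) : ZMod L)} ?_
      · refine le_trans h ?_
        refine le_trans (Finset.card_insert_le _ _) ?_
        have := Finset.card_insert_le ((j : ℕ) : ZMod L) ({((L - 1 : ℕ) : ZMod L)} : Finset (ZMod L))
        simp at this ⊢
        omega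
      · intro r hr
        have hm : r = ((j - 1 : ℕ) : ZMod L) ∨ r = ((j : ℕ) : ZMod L) ∨
            r = ((L - 1 : ℕ) : ZMod L) := by
          rcases hr with hr | hr | hr
          · left; rw [← hr, ZMod.natCast_rightInverse r]
          · right; left; rw [← hr, ZMod.natCast_rightInverse r]
          · right; right; rw [← hr, ZMod.natCast_rightInverse r]
        rcases hm with hm | hm | hm <;> simp [hm]
    calc L * N₀ = ∑ _r : ZMod L, N₀ := by
          rw [Finset.sum_const, Finset.card_univ, ZMod.card, smul_eq_mul]
      _ ≤ ∑ r : ZMod L, ((∑ c : ZMod K, η (c, r) * η (c, r + 1)) +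
            (if r.val = j - 1 ∨ r.val = j ∨ r.val = L - 1 then 1 else 0)) :=
          Finset.sum_le_sum fun r _ => vrow r
      _ = (∑ r : ZMod L, ∑ c : ZMod K, η (c, r) * η (c, r + 1)) +
            (∑ r : ZMod L, if r.val = j - 1 ∨ r.val = j ∨ r.val = L - 1 then 1 else 0) := by
          rw [Finset.sum_add_distrib]
      _ ≤ _ := by omega
  have key : 2 * (L * N₀) ≤ Fnat K L η + (L + 4) := by
    rw [Fnat_eq]
    omega
  rw [Ham_eq_neg_Fnat]
  have := (Nat.cast_le (α := ℝ)).2 key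
  push_cast at this
  linarith

end ham

section adj
variable {K L N₀ : ℕ} [NeZero K] [NeZero L]

lemma neg_cast_val (s : ℕ) (h1 : 1 ≤ s) (h2 : s ≤ K) :
    (-(s : ZMod K) : ZMod K).val = K - s := by
  have hc : ((K - s : ℕ) : ZMod K) = -(s : ZMod K) := by
    rw [Nat.cast_sub h2, ZMod.natCast_self, zero_sub]
  rw [← hc, ZMod.val_cast_of_lt (by omega)]

lemma cast_ne_cast {a b : ℕ} (ha : a < K) (hb : b < K) (hab : a ≠ b) :
    (a : ZMod K) ≠ (b : ZMod K) := by
  intro h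
  have := congrArg ZMod.val h
  rw [ZMod.val_cast_of_lt ha, ZMod.val_cast_of_lt hb] at this
  exact hab this

lemma eq_cast_of_val {z : ZMod K} {s : ℕ} (h : z.val = s) : z = (s : ZMod K) := by
  rw [← h, ZMod.natCast_rightInverse z]

/-- wrapper producing `kawAdj` from pointwise facts -/
lemma kaw_of (η ξ : ZMod K × ZMod L → ℕ) (x y : ZMod K × ZMod L)
    (hxy : x = y + (1, 0)) (hx : η x = 1) (hy : η y = 0)
    (hξx : ξ x = 0) (hξy : ξ y = 1)
    (hupd : ∀ p, p ≠ x → p ≠ y → ξ p = η p) : kawAdj K L η ξ := by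
  constructor
  · intro h
    rw [h] at hy
    rw [hy] at hξy
    exact absurd hξy (by norm_num)
  · refine ⟨x, y, Or.inr (Or.inr (Or.inl hxy)), ?_⟩
    funext p
    rw [Function.update_apply, Function.update_apply, hx, hy]
    by_cases hpy : p = y
    · rw [if_pos hpy, hpy, hξy]
    · rw [if_neg hpy]
      by_cases hpx : p = x
      · rw [if_pos hpx, hpx, hξx]
      · rw [if_neg hpx]
        exact hupd p hpx hpy

variable (hN : 0 < N₀) (hNK2 : N₀ + 2 ≤ K)
include hN hNK2

lemma adj_PQ (b : ZMod K) (j : ℕ) (hj : j < L) :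
    kawAdj K L (Pconf K L N₀ b j) (Qconf K L N₀ b j (b - 1)) := by
  have hjv : ((j : ℕ) : ZMod L).val = j := ZMod.val_cast_of_lt hj
  have hm1 : ((b - 1) - b) = (-1 : ZMod K) := by ring
  have hv1 : (-1 : ZMod K).val = K - 1 := by
    have := neg_cast_val (K := K) 1 le_rfl (by omega); simpa using this
  have hbb : b ≠ b - 1 := by
    intro h
    have := congrArg (fun z => (z - b).val) h
    simp only [sub_self, ZMod.val_zero, hm1, hv1] at this
    omega
  refine kaw_of _ _ (b, (j : ZMod L)) (b - 1, (j : ZMod L)) ?_ ?_ ?_ ?_ ?_ ?_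
  · simp only [Prod.ext_iff, Prod.fst_add, Prod.snd_add]
    exact ⟨by ring, by ring⟩
  · show Pconf K L N₀ b j (b, (j : ZMod L)) = 1
    simp only [Pconf, hjv, lt_self_iff_false, if_false, Ival, sub_self, ZMod.val_zero]
    rw [if_pos hN]
  · show Pconf K L N₀ b j (b - 1, (j : ZMod L)) = 0
    simp only [Pconf, hjv, lt_self_iff_false, if_false, Ival, hm1, hv1]
    rw [if_neg (by omega)]
  · show Qconf K L N₀ b j (b - 1) (b, (j : ZMod L)) = 0
    have hno : ¬ (b - (b + 1)).val < N₀ - 1 := by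
      have h3 : b - (b + 1) = (-1 : ZMod K) := by ring
      rw [h3, hv1]; omega
    simp only [Qconf, hjv, lt_self_iff_false, if_false, if_true, Tval]
    rw [if_neg hbb, if_neg hno]
  · show Qconf K L N₀ b j (b - 1) (b - 1, (j : ZMod L)) = 1
    simp only [Qconf, hjv, lt_self_iff_false, if_false, if_true, Tval]
    try rw [if_pos rfl]
  · rintro ⟨c, r⟩ hpx hpy
    by_cases h1 : r.val < j
    · simp [Pconf, Qconf, h1]
    by_cases h2 : r.val = j
    · have hr : r = ((j : ℕ) : ZMod L) := eq_cast_of_val h2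
      have hcb : c ≠ b := fun h => hpx (by rw [h, hr])
      have hcw : c ≠ b - 1 := fun h => hpy (by rw [h, hr])
      have hz : c - b ≠ 0 := sub_ne_zero.2 hcb
      have h3 : c - (b + 1) = (c - b) - 1 := by ring
      have h4 : (c - (b + 1)).val = (c - b).val - 1 := by rw [h3, val_sub_one _ hz]
      have h5 : 1 ≤ (c - b).val :=
        Nat.pos_of_ne_zero (fun h => hz ((ZMod.val_eq_zero _).1 h))
      have hQ : Qconf K L N₀ b j (b - 1) (c, r) =
          (if (c - b).val - 1 < N₀ - 1 then 1 else 0) := by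
        simp [Qconf, h1, h2, Tval, hcw, h4]
      have hP : Pconf K L N₀ b j (c, r) = (if (c - b).val < N₀ then 1 else 0) := by
        simp [Pconf, h1, Ival]
      rw [hQ, hP]
      by_cases h6 : (c - b).val < N₀
      · rw [if_pos (by omega), if_pos h6]
      · rw [if_neg (by omega), if_neg h6]
    · simp [Pconf, Qconf, h1, h2]

lemma adj_QQ (b : ZMod K) (j : ℕ) (hj : j < L) (t : ℕ) (ht : t + 2 ≤ K - N₀ - 1) :
    kawAdj K L (Qconf K L N₀ b j (b - 1 - (t : ZMod K)))
      (Qconf K L N₀ b j (b - 1 - ((t + 1 : ℕ) : ZMod K))) := by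
  have hjv : ((j : ℕ) : ZMod L).val = j := ZMod.val_cast_of_lt hj
  have hwne : b - 1 - (t : ZMod K) ≠ b - 1 - ((t + 1 : ℕ) : ZMod K) := by
    intro h
    exact cast_ne_cast (K := K) (a := t) (b := t + 1) (by omega) (by omega) (by omega)
      (sub_right_injective h)
  have hval1 : (b - 1 - ((t + 1 : ℕ) : ZMod K) - (b + 1)).val = K - (t + 3) := by
    have h3 : b - 1 - ((t + 1 : ℕ) : ZMod K) - (b + 1) = -(((t + 3 : ℕ) : ZMod K)) := by
      push_cast; ring
    rw [h3, neg_cast_val (t + 3) (by omega) (by omega)]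
  have hval2 : (b - 1 - (t : ZMod K) - (b + 1)).val = K - (t + 2) := by
    have h3 : b - 1 - (t : ZMod K) - (b + 1) = -(((t + 2 : ℕ) : ZMod K)) := by
      push_cast; ring
    rw [h3, neg_cast_val (t + 2) (by omega) (by omega)]
  refine kaw_of _ _ (b - 1 - (t : ZMod K), (j : ZMod L))
    (b - 1 - ((t + 1 : ℕ) : ZMod K), (j : ZMod L)) ?_ ?_ ?_ ?_ ?_ ?_
  · simp only [Prod.ext_iff, Prod.fst_add, Prod.snd_add]
    exact ⟨by push_cast; ring, by ring⟩
  · show Qconf K L N₀ b j (b - 1 - (t : ZMod K)) (b - 1 - (t : ZMod K), (j : ZMod L)) = 1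
    simp only [Qconf, hjv, lt_self_iff_false, if_false, if_true, Tval]
    try rw [if_pos rfl]
  · show Qconf K L N₀ b j (b - 1 - (t : ZMod K))
        (b - 1 - ((t + 1 : ℕ) : ZMod K), (j : ZMod L)) = 0
    have hno : ¬ (b - 1 - ((t + 1 : ℕ) : ZMod K) - (b + 1)).val < N₀ - 1 := by
      rw [hval1]; omega
    simp only [Qconf, hjv, lt_self_iff_false, if_false, if_true, Tval]
    rw [if_neg (Ne.symm hwne), if_neg hno]
  · show Qconf K L N₀ b j (b - 1 - ((t + 1 : ℕ) : ZMod K))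
        (b - 1 - (t : ZMod K), (j : ZMod L)) = 0
    have hno : ¬ (b - 1 - (t : ZMod K) - (b + 1)).val < N₀ - 1 := by
      rw [hval2]; omega
    simp only [Qconf, hjv, lt_self_iff_false, if_false, if_true, Tval]
    rw [if_neg hwne, if_neg hno]
  · show Qconf K L N₀ b j (b - 1 - ((t + 1 : ℕ) : ZMod K))
        (b - 1 - ((t + 1 : ℕ) : ZMod K), (j : ZMod L)) = 1
    simp only [Qconf, hjv, lt_self_iff_false, if_false, if_true, Tval]
    try rw [if_pos rfl]
  · rintro ⟨c, r⟩ hpx hpy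
    by_cases h1 : r.val < j
    · simp [Qconf, h1]
    by_cases h2 : r.val = j
    · have hr : r = ((j : ℕ) : ZMod L) := eq_cast_of_val h2
      have hcx : c ≠ b - 1 - (t : ZMod K) := fun h => hpx (by rw [h, hr])
      have hcy : c ≠ b - 1 - ((t + 1 : ℕ) : ZMod K) := fun h => hpy (by rw [h, hr])
      simp only [Qconf, h1, h2, if_false, if_true]
      rw [Tval, Tval, if_neg hcy, if_neg hcx]
    · simp [Qconf, h1, h2]

lemma adj_QP (b : ZMod K) (j : ℕ) (hj : j < L) :
    kawAdj K L (Qconf K L N₀ b j (b + ((N₀ + 1 : ℕ) : ZMod K))) (Pconf K L N₀ b (j + 1)) := by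
  have hjv : ((j : ℕ) : ZMod L).val = j := ZMod.val_cast_of_lt hj
  have hne : b + ((N₀ : ℕ) : ZMod K) ≠ b + ((N₀ + 1 : ℕ) : ZMod K) := by
    intro h
    exact cast_ne_cast (K := K) (a := N₀) (b := N₀ + 1) (by omega) (by omega) (by omega)
      (add_left_cancel h)
  have hvalN : (b + ((N₀ : ℕ) : ZMod K) - (b + 1)).val = N₀ - 1 := by
    have h3 : b + ((N₀ : ℕ) : ZMod K) - (b + 1) = ((N₀ - 1 : ℕ) : ZMod K) := by
      rw [Nat.cast_sub hN]
      push_cast; ring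
    rw [h3, ZMod.val_cast_of_lt (by omega)]
  have hvalN1 : (b + ((N₀ + 1 : ℕ) : ZMod K) - (b + 1)).val = N₀ := by
    have h3 : b + ((N₀ + 1 : ℕ) : ZMod K) - (b + 1) = ((N₀ : ℕ) : ZMod K) := by
      push_cast; ring
    rw [h3, ZMod.val_cast_of_lt (by omega)]
  refine kaw_of _ _ (b + ((N₀ + 1 : ℕ) : ZMod K), (j : ZMod L))
    (b + ((N₀ : ℕ) : ZMod K), (j : ZMod L)) ?_ ?_ ?_ ?_ ?_ ?_
  · simp only [Prod.ext_iff, Prod.fst_add, Prod.snd_add]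
    exact ⟨by push_cast; ring, by ring⟩
  · show Qconf K L N₀ b j (b + ((N₀ + 1 : ℕ) : ZMod K))
        (b + ((N₀ + 1 : ℕ) : ZMod K), (j : ZMod L)) = 1
    simp only [Qconf, hjv, lt_self_iff_false, if_false, if_true, Tval]
    try rw [if_pos rfl]
  · show Qconf K L N₀ b j (b + ((N₀ + 1 : ℕ) : ZMod K))
        (b + ((N₀ : ℕ) : ZMod K), (j : ZMod L)) = 0
    have hno : ¬ (b + ((N₀ : ℕ) : ZMod K) - (b + 1)).val < N₀ - 1 := by
      rw [hvalN]; omega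
    simp only [Qconf, hjv, lt_self_iff_false, if_false, if_true, Tval]
    rw [if_neg hne, if_neg hno]
  · show Pconf K L N₀ b (j + 1) (b + ((N₀ + 1 : ℕ) : ZMod K), (j : ZMod L)) = 0
    have hno : ¬ (b + ((N₀ + 1 : ℕ) : ZMod K) - (b + 1)).val < N₀ := by
      rw [hvalN1]; omega
    simp only [Pconf, hjv, Ival]
    rw [if_pos (by omega), if_neg hno]
  · show Pconf K L N₀ b (j + 1) (b + ((N₀ : ℕ) : ZMod K), (j : ZMod L)) = 1
    have hyes : (b + ((N₀ : ℕ) : ZMod K) - (b + 1)).val < N₀ := by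
      rw [hvalN]; omega
    simp only [Pconf, hjv, Ival]
    rw [if_pos (by omega), if_pos hyes]
  · rintro ⟨c, r⟩ hpx hpy
    by_cases h1 : r.val < j
    · have h1' : r.val < j + 1 := by omega
      simp [Qconf, Pconf, h1, h1']
    by_cases h2 : r.val = j
    · have hr : r = ((j : ℕ) : ZMod L) := eq_cast_of_val h2
      have hcx : c ≠ b + ((N₀ + 1 : ℕ) : ZMod K) := fun h => hpx (by rw [h, hr])
      have hcy : c ≠ b + ((N₀ : ℕ) : ZMod K) := fun h => hpy (by rw [h, hr])
      have h1' : r.val < j + 1 := by omega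
      have hvne : (c - (b + 1)).val ≠ N₀ - 1 := by
        intro h
        apply hcy
        have h5 := eq_cast_of_val h
        have h4 : c = ((N₀ - 1 : ℕ) : ZMod K) + (b + 1) := by
          rw [← h5]; ring
        rw [h4, Nat.cast_sub hN]
        push_cast; ring
      have hQ : Qconf K L N₀ b j (b + ((N₀ + 1 : ℕ) : ZMod K)) (c, r) =
          (if (c - (b + 1)).val < N₀ - 1 then 1 else 0) := by
        have hcx' : c ≠ b + ((N₀ : ZMod K) + 1) := by push_cast at hcx; exact hcx
        simp [Qconf, h1, h2, Tval, hcx, hcx']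
      have hP : Pconf K L N₀ b (j + 1) (c, r) =
          (if (c - (b + 1)).val < N₀ then 1 else 0) := by
        have h7 : c - (b + 1) = c - b - 1 := by ring
        simp only [Pconf, h2, Ival]
        rw [if_pos (by omega)]
      rw [hQ, hP]
      by_cases h6 : (c - (b + 1)).val < N₀ - 1
      · rw [if_pos h6, if_pos (by omega)]
      · rw [if_neg h6, if_neg (by omega)]
    · have h1' : ¬ r.val < j + 1 := by omega
      simp [Qconf, Pconf, h1, h2, h1']

end adj

end StripAux

namespace StripAux

section path
variable (K L N₀ : ℕ) [NeZero K] [NeZero L]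

def pathJ (b : ZMod K) (j : ℕ) : List (ZMod K × ZMod L → ℕ) :=
  Pconf K L N₀ b j ::
    (List.range (K - N₀ - 1)).map (fun t : ℕ => Qconf K L N₀ b j (b - 1 - (t : ZMod K)))

def pathS (b : ZMod K) : ℕ → List (ZMod K × ZMod L → ℕ)
  | 0 => []
  | n + 1 => pathS b n ++ pathJ K L N₀ b n

def pathA (k : ZMod K) : ℕ → List (ZMod K × ZMod L → ℕ)
  | 0 => []
  | n + 1 => pathA k n ++ pathS K L N₀ (k + (n : ZMod K)) L

variable {K L N₀}

lemma wlast (hNK2 : N₀ + 2 ≤ K) (b : ZMod K) :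
    b - 1 - ((K - N₀ - 2 : ℕ) : ZMod K) = b + ((N₀ + 1 : ℕ) : ZMod K) := by
  have h0 : K - N₀ - 2 = K - (N₀ + 2) := by omega
  have h1 : ((K - N₀ - 2 : ℕ) : ZMod K) = -(((N₀ + 2 : ℕ) : ZMod K)) := by
    rw [h0, Nat.cast_sub hNK2, ZMod.natCast_self, zero_sub]
  rw [h1]
  push_cast
  ring

lemma PconfL_eq (b : ZMod K) : Pconf K L N₀ b L = Pconf K L N₀ (b + 1) 0 := by
  funext p
  simp [Pconf, ZMod.val_lt p.2]

lemma strip_eq_P (k : ZMod K) : strip K L N₀ k = Pconf K L N₀ k 0 := by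
  funext p
  simp [strip, Pconf, Ival]

lemma pathJ_head (b : ZMod K) (j : ℕ) :
    (pathJ K L N₀ b j).head? = some (Pconf K L N₀ b j) := rfl

lemma pathJ_decomp (hNK2 : N₀ + 2 ≤ K) (b : ZMod K) (j : ℕ) :
    pathJ K L N₀ b j = (Pconf K L N₀ b j ::
      (List.range (K - N₀ - 2)).map (fun t : ℕ => Qconf K L N₀ b j (b - 1 - (t : ZMod K)))) ++
      [Qconf K L N₀ b j (b + ((N₀ + 1 : ℕ) : ZMod K))] := by
  have hw : K - N₀ - 1 = (K - N₀ - 2) + 1 := by omega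
  rw [pathJ, hw, List.range_succ, List.map_append]
  simp [wlast hNK2 b]

lemma pathJ_last (hNK2 : N₀ + 2 ≤ K) (b : ZMod K) (j : ℕ) :
    (pathJ K L N₀ b j).getLast? = some (Qconf K L N₀ b j (b + ((N₀ + 1 : ℕ) : ZMod K))) := by
  rw [pathJ_decomp hNK2, List.getLast?_concat]

lemma pathJ_chain (hN : 0 < N₀) (hNK2 : N₀ + 2 ≤ K) (b : ZMod K) (j : ℕ) (hj : j < L) :
    List.Chain' (kawAdj K L) (pathJ K L N₀ b j) := by
  have hw : K - N₀ - 1 = (K - N₀ - 2) + 1 := by omega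
  rw [pathJ, List.Chain', List.isChain_cons]
  constructor
  · intro y hy
    rw [hw, List.range_succ_eq_map, List.map_cons, List.head?_cons] at hy
    simp only [Option.mem_def, Option.some_inj] at hy
    subst hy
    have h0 : b - 1 - ((0 : ℕ) : ZMod K) = b - 1 := by push_cast; ring
    rw [h0]
    exact adj_PQ hN hNK2 b j hj
  · rw [List.isChain_map, hw, List.isChain_range_succ]
    intro t ht
    have := adj_QQ hN hNK2 b j hj t (by omega)
    simpa [Nat.succ_eq_add_one] using this

lemma pathS_spec (hN : 0 < N₀) (hNK2 : N₀ + 2 ≤ K) (b : ZMod K) (n : ℕ)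
    (h1 : 1 ≤ n) (h2 : n ≤ L) :
    List.Chain' (kawAdj K L) (pathS K L N₀ b n) ∧
      (pathS K L N₀ b n).head? = some (Pconf K L N₀ b 0) ∧
      (pathS K L N₀ b n).getLast? =
        some (Qconf K L N₀ b (n - 1) (b + ((N₀ + 1 : ℕ) : ZMod K))) := by
  induction n with
  | zero => omega
  | succ n ih =>
    rcases Nat.eq_zero_or_pos n with hn | hn
    · subst hn
      have hq : pathS K L N₀ b 1 = pathJ K L N₀ b 0 := by
        show [] ++ _ = _
        rw [List.nil_append]
      rw [hq]
      exact ⟨pathJ_chain hN hNK2 b 0 (by omega), pathJ_head b 0, pathJ_last hNK2 b 0⟩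
    · obtain ⟨hc, hh, hl⟩ := ih hn (by omega)
      have hadj : kawAdj K L (Qconf K L N₀ b (n - 1) (b + ((N₀ + 1 : ℕ) : ZMod K)))
          (Pconf K L N₀ b n) := by
        have h := adj_QP (L := L) hN hNK2 b (n - 1) (by omega)
        have he : n - 1 + 1 = n := by omega
        rwa [he] at h
      refine ⟨?_, ?_, ?_⟩
      · show List.Chain' _ (pathS K L N₀ b n ++ pathJ K L N₀ b n)
        refine List.IsChain.append hc (pathJ_chain hN hNK2 b n (by omega)) ?_
        intro x hx y hy
        rw [hl] at hx
        rw [pathJ_head] at hy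
        simp only [Option.mem_def, Option.some_inj] at hx hy
        subst hx; subst hy
        exact hadj
      · show (pathS K L N₀ b n ++ pathJ K L N₀ b n).head? = _
        rw [List.head?_append, hh]
        rfl
      · show (pathS K L N₀ b n ++ pathJ K L N₀ b n).getLast? = _
        rw [List.getLast?_append, pathJ_last hNK2 b n]
        simp

lemma pathA_spec (hN : 0 < N₀) (hNK2 : N₀ + 2 ≤ K) (hL : 0 < L) (k : ZMod K) (n : ℕ)
    (h1 : 1 ≤ n) :
    List.Chain' (kawAdj K L) (pathA K L N₀ k n) ∧
      (pathA K L N₀ k n).head? = some (Pconf K L N₀ k 0) ∧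
      (pathA K L N₀ k n).getLast? =
        some (Qconf K L N₀ (k + ((n - 1 : ℕ) : ZMod K)) (L - 1)
          (k + ((n - 1 : ℕ) : ZMod K) + ((N₀ + 1 : ℕ) : ZMod K))) := by
  induction n with
  | zero => omega
  | succ n ih =>
    rcases Nat.eq_zero_or_pos n with hn | hn
    · subst hn
      have hq : pathA K L N₀ k 1 = pathS K L N₀ k L := by
        show [] ++ pathS K L N₀ (k + ((0 : ℕ) : ZMod K)) L = _
        rw [List.nil_append]
        congr 1
        push_cast
        ring
      rw [hq]
      obtain ⟨hc, hh, hl⟩ := pathS_spec hN hNK2 k L hL le_rfl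
      exact ⟨hc, hh, by simpa using hl⟩
    · obtain ⟨hc, hh, hl⟩ := ih hn
      set bprev := k + ((n - 1 : ℕ) : ZMod K) with hbprev
      have hclass : bprev + 1 = k + ((n : ℕ) : ZMod K) := by
        rw [hbprev]
        have he : n - 1 + 1 = n := by omega
        rw [← he]
        push_cast
        ring
      have hadj : kawAdj K L (Qconf K L N₀ bprev (L - 1) (bprev + ((N₀ + 1 : ℕ) : ZMod K)))
          (Pconf K L N₀ (k + ((n : ℕ) : ZMod K)) 0) := by
        have h := adj_QP (L := L) hN hNK2 bprev (L - 1) (by omega)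
        have he : L - 1 + 1 = L := by omega
        rw [he, PconfL_eq, hclass] at h
        exact h
      obtain ⟨hc2, hh2, hl2⟩ := pathS_spec hN hNK2 (k + ((n : ℕ) : ZMod K)) L hL le_rfl
      refine ⟨?_, ?_, ?_⟩
      · show List.Chain' _ (pathA K L N₀ k n ++ pathS K L N₀ (k + ((n : ℕ) : ZMod K)) L)
        refine List.IsChain.append hc hc2 ?_
        intro x hx y hy
        rw [hl] at hx
        rw [hh2] at hy
        simp only [Option.mem_def, Option.some_inj] at hx hy
        subst hx; subst hy
        exact hadj
      · show (pathA K L N₀ k n ++ _).head? = _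
        rw [List.head?_append, hh]
        rfl
      · show (pathA K L N₀ k n ++ _).getLast? = _
        rw [List.getLast?_append, hl2]
        simp

lemma ham_pathJ (hN : 0 < N₀) (hNK : N₀ < K) (b : ZMod K) (j : ℕ) :
    ∀ ζ ∈ pathJ K L N₀ b j, Ham K L ζ ≤ (-2 * ((L : ℝ) * N₀) + L) + 4 := by
  intro ζ hζ
  rcases List.mem_cons.1 hζ with h | h
  · subst h
    exact hamP hN hNK b j
  · obtain ⟨t, _, rfl⟩ := List.mem_map.1 h
    exact hamQ hN hNK b _ j

lemma ham_pathS (hN : 0 < N₀) (hNK : N₀ < K) (b : ZMod K) (n : ℕ) :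
    ∀ ζ ∈ pathS K L N₀ b n, Ham K L ζ ≤ (-2 * ((L : ℝ) * N₀) + L) + 4 := by
  induction n with
  | zero => intro ζ hζ; simp [pathS] at hζ
  | succ n ih =>
    intro ζ hζ
    rcases List.mem_append.1 hζ with h | h
    · exact ih ζ h
    · exact ham_pathJ hN hNK b n ζ h

lemma ham_pathA (hN : 0 < N₀) (hNK : N₀ < K) (k : ZMod K) (n : ℕ) :
    ∀ ζ ∈ pathA K L N₀ k n, Ham K L ζ ≤ (-2 * ((L : ℝ) * N₀) + L) + 4 := by
  induction n with
  | zero => intro ζ hζ; simp [pathA] at hζ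
  | succ n ih =>
    intro ζ hζ
    rcases List.mem_append.1 hζ with h | h
    · exact ih ζ h
    · exact ham_pathS hN hNK _ L ζ h

end path
end StripAux

/-- `Φ(σᵏ, σᵏ') ≤ H₀ + 4`: there is a Kawasaki path from `σᵏ` to `σᵏ'`
along which the Hamiltonian never exceeds `H₀ + 4 = −2LN₀ + L + 4`. -/
theorem strip_to_strip_path (K L N₀ : ℕ) [NeZero K] [NeZero L]
    (hKL : L < K) (hlow : L < 4 * N₀) (hhigh : 2 * N₀ < K)
    (k k' : ZMod K) (hkk' : k ≠ k') :
    ∃ ω : List (ZMod K × ZMod L → ℕ),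
      ω.Chain' (kawAdj K L) ∧
      ω.head? = some (strip K L N₀ k) ∧
      ω.getLast? = some (strip K L N₀ k') ∧
      ∀ ζ ∈ ω, Ham K L ζ ≤ (-2 * ((L : ℝ) * N₀) + L) + 4 := by
  have hL : 0 < L := Nat.pos_of_ne_zero (NeZero.ne L)
  have hN : 0 < N₀ := by omega
  have hNK : N₀ < K := by omega
  have hNK2 : N₀ + 2 ≤ K := by omega
  set m := (k' - k).val with hm
  have hm1 : 1 ≤ m := by
    rcases Nat.eq_zero_or_pos m with h | h
    · exfalso
      rw [hm] at h
      have h2 : k' - k = 0 := (ZMod.val_eq_zero _).1 h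
      exact hkk' (sub_eq_zero.1 h2).symm
    · exact h
  have hkm : k + (m : ZMod K) = k' := by
    rw [hm, ZMod.natCast_rightInverse (k' - k)]
    ring
  obtain ⟨hc, hh, hl⟩ := StripAux.pathA_spec hN hNK2 hL k m hm1
  refine ⟨StripAux.pathA K L N₀ k m ++ [strip K L N₀ k'], ?_, ?_, ?_, ?_⟩
  · refine List.IsChain.append hc (List.isChain_singleton _) ?_
    intro x hx y hy
    rw [hl] at hx
    simp only [List.head?_cons, Option.mem_def, Option.some_inj] at hx hy
    subst hx; subst hy
    have hadj := StripAux.adj_QP (K := K) (L := L) (N₀ := N₀) hN hNK2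
      (k + ((m - 1 : ℕ) : ZMod K)) (L - 1) (by omega)
    have he : L - 1 + 1 = L := by omega
    rw [he, StripAux.PconfL_eq] at hadj
    have he2 : k + ((m - 1 : ℕ) : ZMod K) + 1 = k' := by
      rw [← hkm]
      have h3 : m - 1 + 1 = m := by omega
      rw [← h3]
      push_cast
      ring
    rw [he2] at hadj
    rwa [StripAux.strip_eq_P k']
  · rw [List.head?_append, hh, StripAux.strip_eq_P k]
    rfl
  · rw [List.getLast?_append]
    rfl
  · intro ζ hζ
    rcases List.mem_append.1 hζ with h | h
    · exact StripAux.ham_pathA hN hNK k m ζ h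
    · have h2 : ζ = strip K L N₀ k' := by simpa using h
      subst h2
      rw [StripAux.strip_eq_P k']
      exact StripAux.hamP hN hNK k' 0
end

section
/- For any two distinct shallow bottoms at the same level m ∈ [1, L−1] in the Kawasaki landscape, σ^k_{m;ℓ,ℓ'} and σ^k_{m;ℓ'',ℓ'''}, there exists a path of Kawasaki moves connecting them whose height is at most H₀ + 3; i.e., Φ(σ^k_{m;ℓ,ℓ'}, σ^k_{m;ℓ'',ℓ'''}) ≤ H₀ + 3 < H₀ + 4. -/
def shallowBottom (K L N₀ : ℕ) [NeZero K] [NeZero L] (m : ℕ) (k : ZMod K)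
    (ℓ ℓ' : ZMod L) : ZMod K × ZMod L → ℕ :=
  fun x =>
    if (x.1 - (k + 1)).val < N₀ - 1 ∨
        (x.1 = k ∧ (x.2 - ℓ).val < L - m) ∨
        (x.1 = k + (N₀ : ZMod K) ∧ (x.2 - ℓ').val < m) then 1 else 0

set_option linter.unusedSectionVars false
open Finset

section PathMachinery
variable {α : Type*} (R : α → α → Prop) (G : α → Prop)

def IsPath (x y : α) : Prop :=
  ∃ ω : List α, ω.Chain' R ∧ ω.head? = some x ∧ ω.getLast? = some y ∧ ∀ z ∈ ω, G z

variable {R G}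

lemma IsPath.refl {x : α} (hx : G x) : IsPath R G x x :=
  ⟨[x], by simp [List.Chain'], by simp, by simp, by simpa⟩

lemma IsPath.trans {x y z : α} (h1 : IsPath R G x y) (h2 : IsPath R G y z) :
    IsPath R G x z := by
  obtain ⟨ω1, c1, h1h, h1l, g1⟩ := h1
  obtain ⟨ω2, c2, h2h, h2l, g2⟩ := h2
  cases ω2 with
  | nil => simp at h2h
  | cons b l =>
    have hb : b = y := by simpa using h2h
    subst hb
    refine ⟨ω1 ++ l, ?_, ?_, ?_, ?_⟩
    · rw [List.Chain', List.isChain_append]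
      refine ⟨c1, List.IsChain.tail c2, ?_⟩
      intro p hp q hq
      have hpy : p = b := by
        rw [Option.mem_def, h1l] at hp
        exact (Option.some_injective _ hp.symm)
      subst hpy
      cases l with
      | nil => simp at hq
      | cons q' l' =>
        have : q = q' := by simpa using hq.symm
        subst this
        exact (List.isChain_cons_cons.mp c2).1
    · cases ω1 with
      | nil => simp at h1h
      | cons a l1 =>
        have : a = x := by simpa using h1h
        subst this
        simp
    · cases l with
      | nil =>
        simp only [List.append_nil]
        rw [h1l]
        simpa using h2l
      | cons q l' =>
        rw [List.getLast?_append_of_ne_nil _ (by simp)]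
        simpa using h2l
    · intro w hw
      rcases List.mem_append.mp hw with h | h
      · exact g1 w h
      · exact g2 w (by simp [h])

lemma IsPath.single {x y : α} (h : R x y) (hx : G x) (hy : G y) : IsPath R G x y :=
  ⟨[x, y], by simpa [List.Chain'] using h, by simp, by simp, by
    intro z hz; simp at hz; rcases hz with rfl | rfl <;> assumption⟩

lemma IsPath.map {β : Type*} {R' : β → β → Prop} {G' : β → Prop} (f : α → β)
    {x y : α} (h : IsPath R G x y) (hR : ∀ u v, R u v → R' (f u) (f v))
    (hG : ∀ u, G u → G' (f u)) : IsPath R' G' (f x) (f y) := by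
  obtain ⟨ω, c, hh, hl, g⟩ := h
  refine ⟨ω.map f, List.isChain_map_of_isChain f hR c, ?_, ?_, ?_⟩
  · rw [List.head?_map, hh]; rfl
  · rw [List.getLast?_map, hl]; rfl
  · rintro w hw
    obtain ⟨u, hu, rfl⟩ := List.mem_map.mp hw
    exact hG u (g u hu)

end PathMachinery


set_option linter.unusedSectionVars false

section ZModHelpers
variable {L : ℕ} [NeZero L]

lemma zmod_coe_val (y : ZMod L) : ((y.val : ℕ) : ZMod L) = y := ZMod.natCast_rightInverse y

lemma sum_shift (w : ZMod L) (f : ZMod L → ℝ) :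
    ∑ y : ZMod L, f y = ∑ i ∈ range L, f (w + (i : ℕ)) := by
  refine Finset.sum_nbij' (fun y => (y - w).val) (fun i => w + (i : ℕ)) ?_ ?_ ?_ ?_ ?_
  · intro y _; exact mem_range.mpr (ZMod.val_lt _)
  · intro i _; exact mem_univ _
  · intro y _; show w + (((y - w).val : ℕ) : ZMod L) = y
    rw [zmod_coe_val, add_sub_cancel]
  · intro i hi; show ((w + (i:ℕ)) - w).val = i
    rw [add_sub_cancel_left, ZMod.val_natCast, Nat.mod_eq_of_lt (mem_range.mp hi)]
  · intro y _; show f y = f (w + (((y - w).val : ℕ) : ZMod L))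
    rw [zmod_coe_val, add_sub_cancel]

lemma val_shift_one (hL : 2 ≤ L) (w y : ZMod L) :
    (y - (w + 1)).val = ((y - w).val + (L - 1)) % L := by
  have h1 : ((L - 1 : ℕ) : ZMod L) = -1 := by
    rw [Nat.cast_sub (by omega), ZMod.natCast_self]; ring
  have h2 : y - (w + 1) = (y - w) + ((L - 1 : ℕ) : ZMod L) := by rw [h1]; ring
  rw [h2, ZMod.val_add, ZMod.val_natCast,
    Nat.mod_eq_of_lt (show L - 1 < L by omega)]

lemma add_natCast_inj (w : ZMod L) {u c : ℕ} (hu : u < L) (hc : c < L) :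
    w + (u : ℕ) = w + (c : ℕ) ↔ u = c := by
  constructor
  · intro h
    have h2 : ((u : ℕ) : ZMod L) = (c : ℕ) := by exact add_left_cancel h
    have := congrArg ZMod.val h2
    rwa [ZMod.val_natCast, ZMod.val_natCast, Nat.mod_eq_of_lt hu, Nat.mod_eq_of_lt hc] at this
  · rintro rfl; rfl

omit [NeZero L] in
lemma val_base_add (w : ZMod L) [NeZero L] (i : ℕ) (hi : i < L) : ((w + (i:ℕ)) - w).val = i := by
  rw [add_sub_cancel_left, ZMod.val_natCast, Nat.mod_eq_of_lt hi]

lemma sum_ite_lt_range (n c : ℕ) (hc : c ≤ n) :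
    ∑ i ∈ range n, (if i < c then (1:ℝ) else 0) = c := by
  have h : ∀ i, (if i < c then (1:ℝ) else 0) = if i ∈ range c then (1:ℝ) else 0 := by
    intro i; simp
  simp_rw [h]
  rw [Finset.sum_ite_mem, show range n ∩ range c = range c from by
    ext i; simp; omega]
  simp

end ZModHelpers

section Cfg
variable (K L N₀ : ℕ) [NeZero K] [NeZero L]

def cfg (k : ZMod K) (a b : ZMod L → ℕ) : ZMod K × ZMod L → ℕ := fun x =>
  if (x.1 - (k + 1)).val < N₀ - 1 then 1
  else if x.1 = k then a x.2
  else if x.1 = k + (N₀ : ZMod K) then b x.2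
  else 0

variable {K L N₀} (k : ZMod K) (hN : 1 ≤ N₀) (hK : 2 * N₀ < K)

include hN hK

lemma strip_k : ¬ ((k - (k + 1)).val < N₀ - 1) := by
  have h1 : k - (k + 1) = ((K - 1 : ℕ) : ZMod K) := by
    rw [Nat.cast_sub (by omega), ZMod.natCast_self]; push_cast; ring
  rw [h1, ZMod.val_natCast, Nat.mod_eq_of_lt (by omega)]
  omega

lemma strip_kN : ¬ ((k + (N₀ : ZMod K) - (k + 1)).val < N₀ - 1) := by
  have h1 : k + (N₀ : ZMod K) - (k + 1) = ((N₀ - 1 : ℕ) : ZMod K) := by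
    rw [Nat.cast_sub (by omega)]; push_cast; ring
  rw [h1, ZMod.val_natCast, Nat.mod_eq_of_lt (by omega)]
  omega

lemma kN_ne_k : k + (N₀ : ZMod K) ≠ k := by
  intro h
  have h2 : ((N₀ : ℕ) : ZMod K) = ((0 : ℕ) : ZMod K) := by
    push_cast; exact left_eq_add.mp h.symm
  have := congrArg ZMod.val h2
  rw [ZMod.val_natCast, ZMod.val_natCast, Nat.mod_eq_of_lt (by omega),
    Nat.mod_eq_of_lt (by omega)] at this
  omega

variable {k}

lemma cfg_k (a b : ZMod L → ℕ) (y : ZMod L) : cfg K L N₀ k a b (k, y) = a y := by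
  simp only [cfg]
  rw [if_neg (strip_k k hN hK)]
  simp


lemma cfg_kN (a b : ZMod L → ℕ) (y : ZMod L) :
    cfg K L N₀ k a b (k + (N₀ : ZMod K), y) = b y := by
  simp only [cfg]
  rw [if_neg (strip_kN k hN hK), if_neg (kN_ne_k k hN hK)]
  simp

lemma cfg_strip (a b : ZMod L → ℕ) (y : ZMod L) (i : ℕ) (hi : i < N₀ - 1) :
    cfg K L N₀ k a b (k + 1 + (i : ℕ), y) = 1 := by
  simp only [cfg]
  rw [if_pos]
  show ((k + 1 + (i:ℕ)) - (k+1)).val < N₀ - 1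
  rw [val_base_add _ _ (by omega)]
  exact hi

end Cfg

section HamBound
variable {K L N₀ : ℕ} [NeZero K] [NeZero L] {k : ZMod K}
  (hN : 1 ≤ N₀) (hK : 2 * N₀ < K)

lemma sum_filter_strip (hN : 1 ≤ N₀) (hK : 2 * N₀ < K) (k : ZMod K) (g : ZMod K → ℝ) :
    ∑ c ∈ univ.filter (fun c : ZMod K => (c - (k + 1)).val < N₀ - 1), g c
      = ∑ i ∈ range (N₀ - 1), g (k + 1 + (i : ℕ)) := by
  refine Finset.sum_nbij' (fun c => (c - (k + 1)).val) (fun i => k + 1 + (i : ℕ)) ?_ ?_ ?_ ?_ ?_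
  · intro c hc; exact mem_range.mpr (by simpa using hc)
  · intro i hi
    have hi' := mem_range.mp hi
    simp only [mem_filter, mem_univ, true_and]
    rw [val_base_add _ _ (by omega)]
    exact hi'
  · intro c _; show (k+1) + (((c - (k+1)).val : ℕ) : ZMod K) = c
    rw [zmod_coe_val, add_sub_cancel]
  · intro i hi; show (((k+1) + (i:ℕ)) - (k+1)).val = i
    exact val_base_add _ _ (by have := mem_range.mp hi; omega)
  · intro c _; show g c = g ((k+1) + (((c - (k+1)).val : ℕ) : ZMod K))
    rw [zmod_coe_val, add_sub_cancel]

include hN hK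

lemma Ham_cfg_le (a b : ZMod L → ℕ)
    (hs : (∑ y : ZMod L, (a y : ℝ)) + (∑ y : ZMod L, (b y : ℝ)) = L)
    (hv : (L : ℝ) - 3 ≤ (∑ y : ZMod L, (a y : ℝ) * (a (y+1) : ℝ))
        + (∑ y : ZMod L, (b y : ℝ) * (b (y+1) : ℝ))) :
    Ham K L (cfg K L N₀ k a b) ≤ (-2 * ((L : ℝ) * N₀) + L) + 3 := by
  set sa := ∑ y : ZMod L, (a y : ℝ) with hsa
  set sb := ∑ y : ZMod L, (b y : ℝ) with hsb
  set va := ∑ y : ZMod L, (a y : ℝ) * (a (y+1) : ℝ) with hva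
  set vb := ∑ y : ZMod L, (b y : ℝ) * (b (y+1) : ℝ) with hvb
  have hL1 : 1 ≤ L := Nat.one_le_iff_ne_zero.mpr (NeZero.ne L)
  -- Vertical sum: exact value
  have hV : (∑ x : ZMod K × ZMod L, (cfg K L N₀ k a b x : ℝ) * (cfg K L N₀ k a b (x + (0, 1)) : ℝ))
      = ((N₀:ℝ) - 1) * L + (va + vb) := by
    rw [Fintype.sum_prod_type]
    have inner : ∀ c : ZMod K, (∑ y : ZMod L,
        (cfg K L N₀ k a b (c, y) : ℝ) * (cfg K L N₀ k a b ((c, y) + (0, 1)) : ℝ))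
        = (if (c - (k+1)).val < N₀ - 1 then (L:ℝ) else 0)
          + ((if c = k then va else 0) + (if c = k + (N₀ : ZMod K) then vb else 0)) := by
      intro c
      have hx : ∀ y : ZMod L, ((c, y) : ZMod K × ZMod L) + (0, 1) = (c, y + 1) := by
        intro y; simp [Prod.ext_iff]
      simp_rw [hx]
      by_cases h1 : (c - (k+1)).val < N₀ - 1
      · have e2 : ¬ (c = k) := fun h => strip_k k hN hK (h ▸ h1)
        have e3 : ¬ (c = k + (N₀ : ZMod K)) := fun h => strip_kN k hN hK (h ▸ h1)
        rw [if_pos h1, if_neg e2, if_neg e3]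
        simp only [cfg, if_pos h1]
        simp [Finset.card_univ]
      · rw [if_neg h1]
        by_cases h2 : c = k
        · subst h2
          have e3 : ¬ (c = c + (N₀ : ZMod K)) := fun h => kN_ne_k c hN hK h.symm
          rw [if_pos rfl, if_neg e3]
          simp only [cfg, if_neg h1, if_pos rfl]
          simp [hva]
        · by_cases h3 : c = k + (N₀ : ZMod K)
          · rw [if_neg h2, if_pos h3]
            simp only [cfg, if_neg h1, if_neg h2, if_pos h3]
            simp [hvb]
          · rw [if_neg h2, if_neg h3]
            simp only [cfg, if_neg h1, if_neg h2, if_neg h3]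
            simp
    simp_rw [inner]
    rw [Finset.sum_add_distrib, Finset.sum_add_distrib]
    have e1 : ∑ c : ZMod K, (if (c - (k+1)).val < N₀ - 1 then (L:ℝ) else 0)
        = ((N₀:ℝ) - 1) * L := by
      refine (sum_shift (k+1) _).trans ?_
      have : ∀ i ∈ range K, (if (((k+1) + (i:ℕ)) - (k+1)).val < N₀ - 1 then (L:ℝ) else 0)
          = (L:ℝ) * (if i < N₀ - 1 then (1:ℝ) else 0) := by
        intro i hi
        rw [val_base_add _ _ (mem_range.mp hi)]
        split_ifs <;> ring
      rw [Finset.sum_congr rfl this, ← Finset.mul_sum,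
        sum_ite_lt_range K (N₀-1) (by omega)]
      have : ((N₀ - 1 : ℕ) : ℝ) = (N₀ : ℝ) - 1 := by
        push_cast [Nat.cast_sub hN]; ring
      rw [this]; ring
    have e2 : ∑ c : ZMod K, (if c = k then va else 0) = va := by
      rw [Finset.sum_ite_eq' univ k (fun _ => va)]; simp
    have e3 : ∑ c : ZMod K, (if c = k + (N₀ : ZMod K) then vb else 0) = vb := by
      rw [Finset.sum_ite_eq' univ (k + (N₀ : ZMod K)) (fun _ => vb)]; simp
    rw [e1, e2, e3]
  -- Horizontal sum: lower bound
  have hH : ((N₀:ℝ) - 1) * L ≤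
      (∑ x : ZMod K × ZMod L, (cfg K L N₀ k a b x : ℝ) * (cfg K L N₀ k a b (x + (1, 0)) : ℝ)) := by
    rw [Fintype.sum_prod_type]
    have hx : ∀ (c : ZMod K) (y : ZMod L), ((c, y) : ZMod K × ZMod L) + (1, 0) = (c + 1, y) := by
      intro c y; simp [Prod.ext_iff]
    simp_rw [hx]
    set F : ZMod K → ℝ := fun c => ∑ y : ZMod L,
      (cfg K L N₀ k a b (c, y) : ℝ) * (cfg K L N₀ k a b (c + 1, y) : ℝ) with hF
    have Fnonneg : ∀ c, 0 ≤ F c := by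
      intro c; apply Finset.sum_nonneg; intro y _; positivity
    rcases Nat.lt_or_ge N₀ 2 with hN2 | hN2
    · -- N₀ = 1
      have : N₀ = 1 := by omega
      subst this
      simp only [Nat.cast_one, sub_self, zero_mul]
      exact Finset.sum_nonneg fun c _ => Fnonneg c
    · -- N₀ ≥ 2
      have hsub : insert k (univ.filter (fun c : ZMod K => (c - (k + 1)).val < N₀ - 1))
          ⊆ univ := by intro c _; exact mem_univ c
      have hkmem : k ∉ univ.filter (fun c : ZMod K => (c - (k + 1)).val < N₀ - 1) := by
        simp only [mem_filter, mem_univ, true_and]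
        exact strip_k k hN hK
      have step1 : ∑ c ∈ insert k (univ.filter
            (fun c : ZMod K => (c - (k + 1)).val < N₀ - 1)), F c
          ≤ ∑ c : ZMod K, F c := by
        apply Finset.sum_le_sum_of_subset_of_nonneg hsub
        intro c _ _; exact Fnonneg c
      refine le_trans ?_ step1
      rw [Finset.sum_insert hkmem]
      -- F k = sa
      have ek : F k = sa := by
        rw [hF]
        have h1 : ∀ y : ZMod L, cfg K L N₀ k a b (k, y) = a y := cfg_k hN hK a b
        have h2 : ∀ y : ZMod L, cfg K L N₀ k a b (k + 1, y) = 1 := by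
          intro y
          have : (k + 1 : ZMod K) = k + 1 + ((0:ℕ) : ZMod K) := by push_cast; ring
          rw [this]
          exact cfg_strip hN hK a b y 0 (by omega)
        simp only [h1, h2]
        simp [hsa]
      -- sum over strip
      have estrip : ∑ c ∈ univ.filter (fun c : ZMod K => (c - (k + 1)).val < N₀ - 1), F c
          = ((N₀:ℝ) - 2) * L + sb := by
        rw [sum_filter_strip hN hK k F]
        have hsucc : N₀ - 1 = (N₀ - 2) + 1 := by omega
        rw [hsucc, Finset.sum_range_succ]
        have emid : ∀ i ∈ range (N₀ - 2), F (k + 1 + (i:ℕ)) = (L:ℝ) := by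
          intro i hi
          have hi' := mem_range.mp hi
          rw [hF]
          have h1 : ∀ y : ZMod L, cfg K L N₀ k a b (k + 1 + (i:ℕ), y) = 1 :=
            fun y => cfg_strip hN hK a b y i (by omega)
          have h2 : ∀ y : ZMod L, cfg K L N₀ k a b (k + 1 + (i:ℕ) + 1, y) = 1 := by
            intro y
            have : (k + 1 + (i:ℕ) + 1 : ZMod K) = k + 1 + ((i+1:ℕ) : ZMod K) := by
              push_cast; ring
            rw [this]
            exact cfg_strip hN hK a b y (i+1) (by omega)
          simp only [h1, h2]
          simp [Finset.card_univ]
        rw [Finset.sum_congr rfl emid]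
        have elast : F (k + 1 + ((N₀ - 2 : ℕ) : ZMod K)) = sb := by
          rw [hF]
          have h1 : ∀ y : ZMod L, cfg K L N₀ k a b (k + 1 + ((N₀-2:ℕ) : ZMod K), y) = 1 :=
            fun y => cfg_strip hN hK a b y (N₀-2) (by omega)
          have h2 : ∀ y : ZMod L, cfg K L N₀ k a b (k + 1 + ((N₀-2:ℕ) : ZMod K) + 1, y) = b y := by
            intro y
            have : (k + 1 + ((N₀-2:ℕ) : ZMod K) + 1 : ZMod K) = k + (N₀ : ZMod K) := by
              rw [Nat.cast_sub hN2]; push_cast; ring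
            rw [this]
            exact cfg_kN hN hK a b y
          simp only [h1, h2]
          simp [hsb]
        rw [elast, Finset.sum_const, Finset.card_range, nsmul_eq_mul]
        have : ((N₀ - 2 : ℕ) : ℝ) = (N₀ : ℝ) - 2 := by
          push_cast [Nat.cast_sub hN2]; ring
        rw [this]
      rw [ek, estrip]
      have : sa + (((N₀:ℝ) - 2) * L + sb) = ((N₀:ℝ) - 2) * L + (L:ℝ) := by
        rw [← hs]; ring
      rw [this]
      nlinarith [hv, hs]
  -- combine
  rw [Ham]
  have := hv
  nlinarith [hH, hV.ge, hV.le]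

end HamBound

def colAdj (L : ℕ) [NeZero L] (a a' : ZMod L → ℕ) : Prop :=
  ∃ y : ZMod L, a y ≠ a (y + 1) ∧
    a' = Function.update (Function.update a y (a (y + 1))) (y + 1) (a y)

section Lift
variable {K L N₀ : ℕ} [NeZero K] [NeZero L] {k : ZMod K}
  (hN : 1 ≤ N₀) (hK : 2 * N₀ < K) (hL : 2 ≤ L)

lemma succ_ne (hL : 2 ≤ L) (y : ZMod L) : y + 1 ≠ y := by
  intro h
  have h1 : ((1:ℕ) : ZMod L) = ((0:ℕ) : ZMod L) := by
    push_cast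
    exact add_eq_left.mp (by rwa [add_comm] at h)
  have := congrArg ZMod.val h1
  rw [ZMod.val_natCast, ZMod.val_natCast, Nat.mod_eq_of_lt (by omega),
    Nat.mod_eq_of_lt (by omega)] at this
  omega

include hN hK hL

lemma kaw_left (a a' b : ZMod L → ℕ) (h : colAdj L a a') :
    kawAdj K L (cfg K L N₀ k a b) (cfg K L N₀ k a' b) := by
  obtain ⟨y0, hne, ha'⟩ := h
  have hy10 : (y0 + 1) ≠ y0 := succ_ne hL y0
  constructor
  · intro heq
    apply hne
    have := congrFun heq (k, y0 + 1)
    rw [cfg_k hN hK, cfg_k hN hK, ha', Function.update_self] at this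
    exact this.symm
  · refine ⟨(k, y0), (k, y0 + 1), Or.inr (Or.inl (by simp [Prod.ext_iff])), ?_⟩
    funext p
    obtain ⟨c, y⟩ := p
    rw [Function.update_apply, Function.update_apply]
    by_cases hcy : ((c, y) : ZMod K × ZMod L) = (k, y0 + 1)
    · rw [if_pos hcy, hcy]
      rw [cfg_k hN hK, cfg_k hN hK, ha', Function.update_self]
    · rw [if_neg hcy]
      by_cases hcx : ((c, y) : ZMod K × ZMod L) = (k, y0)
      · rw [if_pos hcx, hcx]
        rw [cfg_k hN hK, cfg_k hN hK, ha', Function.update_of_ne hy10.symm,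
          Function.update_self]
      · rw [if_neg hcx]
        have hyy : c = k → y ≠ y0 + 1 := by
          intro hc hy; exact hcy (by rw [hc, hy])
        have hyx : c = k → y ≠ y0 := by
          intro hc hy; exact hcx (by rw [hc, hy])
        simp only [cfg]
        split_ifs with h1 h2
        · rfl
        · rw [ha', Function.update_of_ne (hyy h2), Function.update_of_ne (hyx h2)]
        · rfl
        · rfl

lemma kaw_right (a b b' : ZMod L → ℕ) (h : colAdj L b b') :
    kawAdj K L (cfg K L N₀ k a b) (cfg K L N₀ k a b') := by
  obtain ⟨y0, hne, hb'⟩ := h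
  have hy10 : (y0 + 1) ≠ y0 := succ_ne hL y0
  constructor
  · intro heq
    apply hne
    have := congrFun heq (k + (N₀ : ZMod K), y0 + 1)
    rw [cfg_kN hN hK, cfg_kN hN hK, hb', Function.update_self] at this
    exact this.symm
  · refine ⟨(k + (N₀ : ZMod K), y0), (k + (N₀ : ZMod K), y0 + 1),
      Or.inr (Or.inl (by simp [Prod.ext_iff])), ?_⟩
    funext p
    obtain ⟨c, y⟩ := p
    rw [Function.update_apply, Function.update_apply]
    by_cases hcy : ((c, y) : ZMod K × ZMod L) = (k + (N₀ : ZMod K), y0 + 1)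
    · rw [if_pos hcy, hcy]
      rw [cfg_kN hN hK, cfg_kN hN hK, hb', Function.update_self]
    · rw [if_neg hcy]
      by_cases hcx : ((c, y) : ZMod K × ZMod L) = (k + (N₀ : ZMod K), y0)
      · rw [if_pos hcx, hcx]
        rw [cfg_kN hN hK, cfg_kN hN hK, hb', Function.update_of_ne hy10.symm,
          Function.update_self]
      · rw [if_neg hcx]
        have hyy : c = k + (N₀ : ZMod K) → y ≠ y0 + 1 := by
          intro hc hy; exact hcy (by rw [hc, hy])
        have hyx : c = k + (N₀ : ZMod K) → y ≠ y0 := by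
          intro hc hy; exact hcx (by rw [hc, hy])
        simp only [cfg]
        split_ifs with h1 h2 h3
        · rfl
        · rfl
        · rw [hb', Function.update_of_ne (hyy h3), Function.update_of_ne (hyx h3)]
        · rfl

end Lift

def stick (L : ℕ) [NeZero L] (z : ZMod L) (t : ℕ) : ZMod L → ℕ :=
  fun y => if (y - z).val < t then 1 else 0

lemma shallowBottom_eq_cfg {K L N₀ : ℕ} [NeZero K] [NeZero L] {k : ZMod K}
    (hN : 1 ≤ N₀) (hK : 2 * N₀ < K) (m : ℕ) (ℓ ℓ' : ZMod L) :
    shallowBottom K L N₀ m k ℓ ℓ' = cfg K L N₀ k (stick L ℓ (L - m)) (stick L ℓ' m) := by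
  funext p
  obtain ⟨c, y⟩ := p
  simp only [shallowBottom, cfg, stick]
  by_cases h1 : (c - (k + 1)).val < N₀ - 1
  · simp [h1]
  · by_cases h2 : c = k
    · subst h2
      have h3 : ¬ (c = c + (N₀ : ZMod K)) := fun h => kN_ne_k c hN hK h.symm
      have h1' : ¬ ((-1 : ZMod K)).val < N₀ - 1 := by
        have : c - (c + 1) = (-1 : ZMod K) := by ring
        rwa [this] at h1
      simp [h1', h3]
    · by_cases h3 : c = k + (N₀ : ZMod K)
      · subst h3
        have h1' : ¬ ((N₀ : ZMod K) - 1).val < N₀ - 1 := by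
          have : k + (N₀ : ZMod K) - (k + 1) = (N₀ : ZMod K) - 1 := by ring
          rwa [this] at h1
        simp [h1', h2]
      · simp [h1, h2, h3]

section Column
variable {L : ℕ} [NeZero L] {t : ℕ}

def Gcol (L t : ℕ) [NeZero L] : (ZMod L → ℕ) → Prop := fun a =>
  (∑ y : ZMod L, (a y : ℝ)) = t ∧
  (t : ℝ) - 2 ≤ ∑ y : ZMod L, (a y : ℝ) * (a (y+1) : ℝ)

def aux (L t : ℕ) [NeZero L] (z : ZMod L) (j : ℕ) : ZMod L → ℕ :=
  fun y => if (y - (z+1)).val < t - 1 ∨ (y - (z+1)).val = L - 1 - j then 1 else 0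

variable (hL : 2 ≤ L) (ht1 : 1 ≤ t) (ht2 : t ≤ L - 1)

include hL ht1 ht2

lemma aux_zero (z : ZMod L) : aux L t z 0 = stick L z t := by
  funext y
  simp only [aux, stick]
  rw [val_shift_one hL]
  have hu : (y - z).val < L := ZMod.val_lt _
  rcases eq_or_ne (y - z).val 0 with h0 | h0
  · rw [show ((y - z).val + (L-1)) % L = L - 1 by
      rw [h0, zero_add, Nat.mod_eq_of_lt (by omega)]]
    rw [if_pos (Or.inr (by omega)), if_pos (by omega)]
  · rw [show ((y - z).val + (L-1)) % L = (y - z).val - 1 by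
      rw [show (y - z).val + (L-1) = ((y - z).val - 1) + L by omega,
        Nat.add_mod_right, Nat.mod_eq_of_lt (by omega)]]
    by_cases hlt : (y - z).val < t
    · rw [if_pos (Or.inl (by omega)), if_pos hlt]
    · rw [if_neg (by rintro (h | h) <;> omega), if_neg hlt]

lemma aux_last (z : ZMod L) : aux L t z (L - t) = stick L (z+1) t := by
  funext y
  simp only [aux, stick]
  exact if_congr (by omega) rfl rfl

lemma sum_aux (z : ZMod L) (j : ℕ) (hj : j ≤ L - t) :
    ∑ y : ZMod L, ((aux L t z j y : ℕ) : ℝ) = t := by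
  refine (sum_shift (z+1) _).trans ?_
  have key : ∀ i ∈ range L, ((aux L t z j ((z+1) + (i:ℕ)) : ℕ) : ℝ)
      = (if i < t - 1 then (1:ℝ) else 0) + (if i = L - 1 - j then (1:ℝ) else 0) := by
    intro i hi
    have hi' := mem_range.mp hi
    simp only [aux]
    rw [val_base_add _ _ hi']
    by_cases h1 : i < t - 1
    · rw [if_pos (Or.inl h1), if_pos h1, if_neg (by omega)]; norm_num
    · by_cases h2 : i = L - 1 - j
      · rw [if_pos (Or.inr h2), if_neg h1, if_pos h2]; norm_num
      · rw [if_neg (by rintro (h | h) <;> omega), if_neg h1, if_neg h2]; norm_num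
  rw [Finset.sum_congr rfl key, Finset.sum_add_distrib,
    sum_ite_lt_range L (t-1) (by omega),
    Finset.sum_ite_eq' (range L) (L - 1 - j) (fun _ => (1:ℝ)),
    if_pos (mem_range.mpr (by omega))]
  have : ((t - 1 : ℕ) : ℝ) = (t:ℝ) - 1 := by
    push_cast [Nat.cast_sub ht1]; ring
  rw [this]; ring

lemma v_aux (z : ZMod L) (j : ℕ) (hj : j ≤ L - t) :
    (t : ℝ) - 2 ≤ ∑ y : ZMod L, ((aux L t z j y : ℕ) : ℝ) * ((aux L t z j (y+1) : ℕ) : ℝ) := by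
  have e := sum_shift (z+1) (fun y => ((aux L t z j y : ℕ) : ℝ) * ((aux L t z j (y+1) : ℕ) : ℝ))
  rw [e]
  have lb : ∀ i ∈ range L, (if i < t - 2 then (1:ℝ) else 0)
      ≤ ((aux L t z j ((z+1) + (i:ℕ)) : ℕ) : ℝ) * ((aux L t z j ((z+1) + (i:ℕ) + 1) : ℕ) : ℝ) := by
    intro i hi
    have hi' := mem_range.mp hi
    by_cases h : i < t - 2
    · rw [if_pos h]
      have e1 : aux L t z j ((z+1) + (i:ℕ)) = 1 := by
        simp only [aux]
        rw [val_base_add _ _ hi', if_pos (Or.inl (by omega))]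
      have e2 : aux L t z j ((z+1) + (i:ℕ) + 1) = 1 := by
        have : (z+1) + ((i:ℕ) : ZMod L) + 1 = (z+1) + (((i+1 : ℕ) : ℕ) : ZMod L) := by
          push_cast; ring
        rw [this]
        simp only [aux]
        rw [val_base_add _ _ (by omega), if_pos (Or.inl (by omega))]
      rw [e1, e2]; norm_num
    · rw [if_neg h]; positivity
  have := Finset.sum_le_sum lb
  rw [sum_ite_lt_range L (t-2) (by omega)] at this
  refine le_trans ?_ this
  rcases Nat.lt_or_ge t 2 with h2 | h2
  · have : t = 1 := by omega
    subst this; norm_num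
  · rw [Nat.cast_sub h2]; norm_num

lemma aux_step (z : ZMod L) (j : ℕ) (hj : j < L - t) :
    colAdj L (aux L t z j) (aux L t z (j+1)) := by
  set y0 : ZMod L := (z+1) + ((L - 2 - j : ℕ) : ZMod L) with hy0
  have hv0 : (y0 - (z+1)).val = L - 2 - j := val_base_add _ _ (by omega)
  have hy1 : y0 + 1 = (z+1) + ((L - 1 - j : ℕ) : ZMod L) := by
    rw [hy0, show (L - 1 - j) = (L - 2 - j) + 1 by omega]
    push_cast; ring
  have hv1 : (y0 + 1 - (z+1)).val = L - 1 - j := by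
    rw [hy1]; exact val_base_add _ _ (by omega)
  have e0 : aux L t z j y0 = 0 := by
    simp only [aux]
    rw [hv0, if_neg (by rintro (h | h) <;> omega)]
  have e1 : aux L t z j (y0 + 1) = 1 := by
    simp only [aux]
    rw [hv1, if_pos (Or.inr rfl)]
  refine ⟨y0, by rw [e0, e1]; omega, ?_⟩
  funext y
  rw [Function.update_apply, Function.update_apply]
  by_cases hyy : y = y0 + 1
  · rw [if_pos hyy, e0, hyy]
    simp only [aux]
    rw [hv1, if_neg (by rintro (h | h) <;> omega)]
  · rw [if_neg hyy]
    by_cases hyx : y = y0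
    · rw [if_pos hyx, e1, hyx]
      simp only [aux]
      rw [hv0, if_pos (Or.inr (by omega))]
    · rw [if_neg hyx]
      have hu : y = (z+1) + (((y - (z+1)).val : ℕ) : ZMod L) := by
        rw [zmod_coe_val, add_sub_cancel]
      have hne1 : (y - (z+1)).val ≠ L - 1 - j := by
        intro h
        exact hyy (by rw [hu, h, ← hy1])
      have hne2 : (y - (z+1)).val ≠ L - 2 - j := by
        intro h
        exact hyx (by rw [hu, h, ← hy0])
      simp only [aux]
      exact if_congr (by omega) rfl rfl

lemma rotate_one (z : ZMod L) :
    IsPath (colAdj L) (Gcol L t) (stick L z t) (stick L (z+1) t) := by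
  have claim : ∀ j, j ≤ L - t →
      IsPath (colAdj L) (Gcol L t) (aux L t z 0) (aux L t z j) := by
    intro j
    induction j with
    | zero => intro _; exact IsPath.refl ⟨sum_aux hL ht1 ht2 z 0 (by omega),
        v_aux hL ht1 ht2 z 0 (by omega)⟩
    | succ j ih =>
      intro hj
      exact (ih (by omega)).trans (IsPath.single (aux_step hL ht1 ht2 z j (by omega))
        ⟨sum_aux hL ht1 ht2 z j (by omega), v_aux hL ht1 ht2 z j (by omega)⟩
        ⟨sum_aux hL ht1 ht2 z (j+1) (by omega), v_aux hL ht1 ht2 z (j+1) (by omega)⟩)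
  have := claim (L - t) le_rfl
  rwa [aux_zero hL ht1 ht2, aux_last hL ht1 ht2] at this

lemma rotate_many (z : ZMod L) (d : ℕ) :
    IsPath (colAdj L) (Gcol L t) (stick L z t) (stick L (z + (d:ℕ)) t) := by
  induction d with
  | zero =>
    rw [show z + ((0:ℕ) : ZMod L) = z by push_cast; ring]
    rw [← aux_zero hL ht1 ht2]
    exact IsPath.refl ⟨sum_aux hL ht1 ht2 z 0 (by omega), v_aux hL ht1 ht2 z 0 (by omega)⟩
  | succ d ih =>
    have := ih.trans (rotate_one hL ht1 ht2 (z + (d:ℕ)))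
    rwa [show z + ((d:ℕ) : ZMod L) + 1 = z + (((d+1:ℕ) : ℕ) : ZMod L) by push_cast; ring] at this

lemma rotate_to (z z' : ZMod L) :
    IsPath (colAdj L) (Gcol L t) (stick L z t) (stick L z' t) := by
  have := rotate_many hL ht1 ht2 z ((z' - z).val)
  rwa [zmod_coe_val, add_sub_cancel] at this

lemma stick_sum (z : ZMod L) : ∑ y : ZMod L, ((stick L z t y : ℕ) : ℝ) = t := by
  rw [← aux_zero hL ht1 ht2]
  exact sum_aux hL ht1 ht2 z 0 (by omega)

lemma stick_v (z : ZMod L) :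
    (t : ℝ) - 1 ≤ ∑ y : ZMod L, ((stick L z t y : ℕ) : ℝ) * ((stick L z t (y+1) : ℕ) : ℝ) := by
  have e := sum_shift z (fun y => ((stick L z t y : ℕ) : ℝ) * ((stick L z t (y+1) : ℕ) : ℝ))
  rw [e]
  have lb : ∀ i ∈ range L, (if i < t - 1 then (1:ℝ) else 0)
      ≤ ((stick L z t (z + (i:ℕ)) : ℕ) : ℝ) * ((stick L z t (z + (i:ℕ) + 1) : ℕ) : ℝ) := by
    intro i hi
    have hi' := mem_range.mp hi
    by_cases h : i < t - 1
    · rw [if_pos h]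
      have e1 : stick L z t (z + (i:ℕ)) = 1 := by
        simp only [stick]
        rw [val_base_add _ _ hi', if_pos (by omega)]
      have e2 : stick L z t (z + (i:ℕ) + 1) = 1 := by
        have : z + ((i:ℕ) : ZMod L) + 1 = z + (((i+1 : ℕ) : ℕ) : ZMod L) := by
          push_cast; ring
        rw [this]
        simp only [stick]
        rw [val_base_add _ _ (by omega), if_pos (by omega)]
      rw [e1, e2]; norm_num
    · rw [if_neg h]; positivity
  have := Finset.sum_le_sum lb
  rw [sum_ite_lt_range L (t-1) (by omega)] at this
  refine le_trans ?_ this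
  rw [Nat.cast_sub ht1]; norm_num

end Column

/-- any two distinct shallow bottoms at the same level `m` are joined by
a Kawasaki path of height at most `H₀ + 3 < H₀ + 4`. -/
theorem shallowBottom_connected (K L N₀ : ℕ) [NeZero K] [NeZero L]
    (hKL : L < K) (hlow : L < 4 * N₀) (hhigh : 2 * N₀ < K)
    (m : ℕ) (hm1 : 1 ≤ m) (hm2 : m ≤ L - 1)
    (k : ZMod K) (ℓ ℓ' ℓ'' ℓ''' : ZMod L)
    (hne : (ℓ, ℓ') ≠ (ℓ'', ℓ''')) :
    ∃ ω : List (ZMod K × ZMod L → ℕ),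
      ω.Chain' (kawAdj K L) ∧
      ω.head? = some (shallowBottom K L N₀ m k ℓ ℓ') ∧
      ω.getLast? = some (shallowBottom K L N₀ m k ℓ'' ℓ''') ∧
      ∀ ζ ∈ ω, Ham K L ζ ≤ (-2 * ((L : ℝ) * N₀) + L) + 3 := by
  have hL1 : 1 ≤ L := Nat.one_le_iff_ne_zero.mpr (NeZero.ne L)
  have hL2 : 2 ≤ L := by omega
  have hN : 1 ≤ N₀ := by omega
  have hmL : m ≤ L := by omega
  have ht1 : 1 ≤ L - m := by omega
  have ht2 : L - m ≤ L - 1 := by omega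
  have hcast : ((L - m : ℕ) : ℝ) = (L : ℝ) - m := by
    push_cast [Nat.cast_sub hmL]; ring
  set G : (ZMod K × ZMod L → ℕ) → Prop :=
    fun η => Ham K L η ≤ (-2 * ((L : ℝ) * N₀) + L) + 3 with hG
  have lift1 : ∀ a : ZMod L → ℕ, Gcol L (L - m) a → G (cfg K L N₀ k a (stick L ℓ' m)) := by
    intro a ⟨hsum, hva⟩
    refine Ham_cfg_le hN hhigh a (stick L ℓ' m) ?_ ?_
    · rw [hsum, stick_sum hL2 hm1 hm2 ℓ', hcast]; ring
    · have hvb := stick_v hL2 hm1 hm2 ℓ'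
      rw [hcast] at hva
      linarith
  have lift2 : ∀ b : ZMod L → ℕ, Gcol L m b → G (cfg K L N₀ k (stick L ℓ'' (L - m)) b) := by
    intro b ⟨hsum, hvb⟩
    refine Ham_cfg_le hN hhigh (stick L ℓ'' (L - m)) b ?_ ?_
    · rw [hsum, stick_sum hL2 ht1 ht2 ℓ'', hcast]; ring
    · have hva := stick_v hL2 ht1 ht2 ℓ''
      rw [hcast] at hva
      linarith
  have path1 : IsPath (kawAdj K L) G
      (cfg K L N₀ k (stick L ℓ (L - m)) (stick L ℓ' m))
      (cfg K L N₀ k (stick L ℓ'' (L - m)) (stick L ℓ' m)) :=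
    (rotate_to hL2 ht1 ht2 ℓ ℓ'').map (fun a => cfg K L N₀ k a (stick L ℓ' m))
      (fun u v h => kaw_left hN hhigh hL2 u v (stick L ℓ' m) h) lift1
  have path2 : IsPath (kawAdj K L) G
      (cfg K L N₀ k (stick L ℓ'' (L - m)) (stick L ℓ' m))
      (cfg K L N₀ k (stick L ℓ'' (L - m)) (stick L ℓ''' m)) :=
    (rotate_to hL2 hm1 hm2 ℓ' ℓ''').map (fun b => cfg K L N₀ k (stick L ℓ'' (L - m)) b)
      (fun u v h => kaw_right hN hhigh hL2 (stick L ℓ'' (L - m)) u v h) lift2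
  rw [shallowBottom_eq_cfg hN hhigh, shallowBottom_eq_cfg hN hhigh]
  exact path1.trans path2
end

section
/- Let Ω be a finite connected graph with Hamiltonian H, and let C ⊊ Ω be a cycle. For the Metropolis Markov chain at inverse temperature β and any ξ₀ ∈ ∂*C, the exit distribution satisfies lim_{β→∞} P_{η₀}[η_β(T_{∂C}) = ξ₀] = a(ξ₀) / Σ_{ξ∈∂*C} a(ξ) for every starting point η₀ ∈ C, where a(ξ) = #{η ∈ C : η ~ ξ}, T_{∂C} is the hitting time of ∂C, and ∂*C is the set of H-minimizers of the outer boundary ∂C. -/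
open Filter

variable {Ω : Type*}


lemma aux_mem_of_getLast? {α : Type*} {l : List α} {b : α} (h : l.getLast? = some b) : b ∈ l := by
  obtain ⟨h1, h2⟩ := List.mem_getLast?_eq_getLast (l := l) (x := b) h
  exact h2 ▸ List.getLast_mem h1

lemma aux_max_principle {Ω : Type*} [Fintype Ω]
    (adj : Ω → Ω → Prop)
    (C : Finset Ω)
    (hconn : ∀ η ∈ C, ∀ ξ ∈ C, ∃ ω : List Ω, ω.Chain' adj ∧ ω.head? = some η ∧
      ω.getLast? = some ξ ∧ ∀ x ∈ ω, x ∈ C)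
    (bd : Finset Ω)
    (huniv : ∀ η : Ω, η ∈ C ∨ η ∈ bd)
    (ξ₁ : Ω) (hξ₁ : ξ₁ ∈ bd) (η₁ : Ω) (hη₁ : η₁ ∈ C) (hadj₁ : adj η₁ ξ₁)
    (c : Ω → Ω → ℝ) (hc0 : ∀ η ξ, 0 ≤ c η ξ) (hcpos : ∀ η ξ, adj η ξ → 0 < c η ξ)
    (v : Ω → ℝ) (hv : ∀ η ∈ C, ∑ ξ : Ω, c η ξ * (v ξ - v η) = 0)
    (b : ℝ) (hb : ∀ ξ ∈ bd, v ξ ≤ b) :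
    ∀ x : Ω, v x ≤ b := by
  have hne : (Finset.univ : Finset Ω).Nonempty := ⟨ξ₁, Finset.mem_univ ξ₁⟩
  set M := Finset.univ.sup' hne v with hMdef
  have hM : ∀ x : Ω, v x ≤ M := fun x => Finset.le_sup' v (Finset.mem_univ x)
  -- it suffices to show M ≤ b
  suffices hMb : M ≤ b by exact fun x => le_trans (hM x) hMb
  have step : ∀ η ∈ C, v η = M → ∀ ξ, adj η ξ → v ξ = M := by
    intro η hη hηM ξ hadj
    have h0 := hv η hη
    have hterms : ∀ ζ ∈ Finset.univ, c η ζ * (v ζ - v η) ≤ 0 := by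
      intro ζ _
      exact mul_nonpos_of_nonneg_of_nonpos (hc0 η ζ) (by rw [hηM]; linarith [hM ζ])
    have h1 := (Finset.sum_eq_zero_iff_of_nonpos hterms).mp h0 ξ (Finset.mem_univ ξ)
    have h2 : v ξ - v η = 0 := by
      rcases mul_eq_zero.mp h1 with h | h
      · exact absurd h (ne_of_gt (hcpos η ξ hadj))
      · exact h
    rw [hηM] at h2; linarith
  have prop : ∀ l : List Ω, l.Chain' adj → (∀ x ∈ l, x ∈ C) →
      ∀ aa, l.head? = some aa → v aa = M → ∀ x ∈ l, v x = M := by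
    intro l
    induction l with
    | nil => intro _ _ aa haa; simp at haa
    | cons y t ih =>
      intro hchain hmem aa haa hva x hx
      obtain rfl : y = aa := by simpa using haa
      rcases List.mem_cons.mp hx with rfl | hxt
      · exact hva
      · cases t with
        | nil => simp at hxt
        | cons z t' =>
          have hadjyz : adj y z := (List.isChain_cons_cons.mp hchain).1
          have hvz : v z = M := step y (hmem y (by simp)) hva z hadjyz
          exact ih (List.isChain_cons_cons.mp hchain).2
            (fun w hw => hmem w (List.mem_cons_of_mem _ hw)) z rfl hvz x hxt
  obtain ⟨x₀, _, hx₀⟩ := Finset.exists_mem_eq_sup' hne v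
  rcases huniv x₀ with hC | hbd'
  · obtain ⟨ω, hch, hhead, hlast, hmem⟩ := hconn x₀ hC η₁ hη₁
    have hη₁M : v η₁ = M := prop ω hch hmem x₀ hhead hx₀.symm η₁ (aux_mem_of_getLast? hlast)
    have : v ξ₁ = M := step η₁ hη₁ hη₁M ξ₁ hadj₁
    rw [← this]; exact hb ξ₁ hξ₁
  · rw [hMdef, hx₀]; exact hb x₀ hbd'

lemma aux_chain_bound {Ω : Type*} (adj : Ω → Ω → Prop) (C : Finset Ω)
    (f : Ω → ℝ) (E : ℝ) (hE : 0 ≤ E)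
    (hstep : ∀ x ∈ C, ∀ y ∈ C, adj x y → |f y - f x| ≤ E) :
    ∀ l : List Ω, l.Chain' adj → (∀ x ∈ l, x ∈ C) →
      ∀ aa bb, l.head? = some aa → l.getLast? = some bb →
      |f bb - f aa| ≤ l.length * E := by
  intro l
  induction l with
  | nil => intro _ _ aa bb haa; simp at haa
  | cons y t ih =>
    intro hchain hmem aa bb haa hbb
    obtain rfl : y = aa := by simpa using haa
    cases t with
    | nil =>
      obtain rfl : y = bb := by simpa using hbb
      simp [hE]
    | cons z t' =>
      have hadjyz : adj y z := (List.isChain_cons_cons.mp hchain).1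
      have h1 : |f z - f y| ≤ E :=
        hstep y (hmem y (by simp)) z (hmem z (by simp)) hadjyz
      have hbb' : (z :: t').getLast? = some bb := by
        rw [List.getLast?_cons_cons] at hbb; exact hbb
      have h2 := ih (List.isChain_cons_cons.mp hchain).2
        (fun w hw => hmem w (List.mem_cons_of_mem _ hw)) z bb rfl hbb'
      have habs : |f bb - f y| ≤ |f z - f y| + |f bb - f z| := by
        calc |f bb - f y| = |f y - f bb| := abs_sub_comm _ _
        _ ≤ |f y - f z| + |f z - f bb| := abs_sub_le _ _ _
        _ = |f z - f y| + |f bb - f z| := by rw [abs_sub_comm (f y) (f z), abs_sub_comm (f z) (f bb)]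
      calc |f bb - f y| ≤ |f z - f y| + |f bb - f z| := habs
      _ ≤ E + (z :: t').length * E := add_le_add h1 h2
      _ ≤ (y :: z :: t').length * E := by
          simp only [List.length_cons]
          push_cast
          nlinarith [hE]

/-- sharp asymptotics of the exit distribution from a cycle. The exit
probability `P_{η₀}[η_β(T_{∂C}) = ξ₀]` is encoded, for each `β`, as the value at `η₀`
of the solution `u β` of the Dirichlet problem: `u β = 1` at `ξ₀`, `u β = 0` on
`∂C \ {ξ₀}`, and `u β` harmonic (w.r.t. the Metropolis rates) inside `C`. The claim is
that `u β η₀ → a(ξ₀) / Σ_{ξ ∈ ∂*C} a(ξ)` as `β → ∞`, where `a(ξ) = #{η ∈ C : η ∼ ξ}`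
and `∂*C` is the set of `H`-minimizers of the outer boundary `∂C`. One may assume
`Ω = C ∪ ∂C` with no two boundary points adjacent. -/
theorem exit_distribution_from_cycle [Fintype Ω] [DecidableEq Ω]
    (adj : Ω → Ω → Prop) [DecidableRel adj] (hsym : Symmetric adj)
    (H : Ω → ℝ)
    (C : Finset Ω) (hCne : C.Nonempty)
    (hconn : ∀ η ∈ C, ∀ ξ ∈ C, ∃ ω : List Ω, ω.Chain' adj ∧ ω.head? = some η ∧
      ω.getLast? = some ξ ∧ ∀ x ∈ ω, x ∈ C)
    (bd : Finset Ω)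
    (hbd : bd = Finset.univ.filter fun ξ => ξ ∉ C ∧ ∃ η ∈ C, adj η ξ)
    (hbdne : bd.Nonempty)
    (hcyc : ∀ η ∈ C, ∀ ξ ∈ bd, H η < H ξ)
    (huniv : ∀ η : Ω, η ∈ C ∨ η ∈ bd)
    (hbdsep : ∀ ξ ∈ bd, ∀ ξ' ∈ bd, ¬ adj ξ ξ')
    (bdStar : Finset Ω)
    (hbdStar : bdStar = bd.filter fun ξ => ∀ ζ ∈ bd, H ξ ≤ H ζ)
    (ξ₀ : Ω) (hξ₀ : ξ₀ ∈ bdStar)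
    (a : Ω → ℕ) (ha : ∀ ξ, a ξ = (C.filter fun η => adj η ξ).card)
    (r : ℝ → Ω → Ω → ℝ)
    (hr : ∀ β η ξ, r β η ξ =
      if adj η ξ then Real.exp (-β * max (H ξ - H η) 0) else 0)
    (u : ℝ → Ω → ℝ)
    (hu1 : ∀ β : ℝ, u β ξ₀ = 1)
    (hu0 : ∀ β : ℝ, ∀ ξ ∈ bd, ξ ≠ ξ₀ → u β ξ = 0)
    (huharm : ∀ β : ℝ, 0 < β → ∀ η ∈ C, ∑ ξ : Ω, r β η ξ * (u β ξ - u β η) = 0)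
    (η₀ : Ω) (hη₀ : η₀ ∈ C) :
    Tendsto (fun β => u β η₀) atTop
      (nhds ((a ξ₀ : ℝ) / ∑ ξ ∈ bdStar, (a ξ : ℝ))) := by
  classical
  -- basic facts about the boundary
  have hbdStar_sub : bdStar ⊆ bd := by rw [hbdStar]; exact Finset.filter_subset _ _
  have hξ₀bd : ξ₀ ∈ bd := hbdStar_sub hξ₀
  have hξ₀min : ∀ ζ ∈ bd, H ξ₀ ≤ H ζ := by
    rw [hbdStar] at hξ₀; exact (Finset.mem_filter.mp hξ₀).2
  have hbdmem : ∀ ξ ∈ bd, ξ ∉ C ∧ ∃ η ∈ C, adj η ξ := by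
    intro ξ hξ; rw [hbd] at hξ; exact (Finset.mem_filter.mp hξ).2
  set N : Ω → Finset Ω := fun ξ => C.filter (fun η => adj η ξ) with hN
  have haN : ∀ ξ, (a ξ : ℝ) = ((N ξ).card : ℝ) := by intro ξ; rw [ha]
  have hapos : ∀ ξ ∈ bd, 0 < (a ξ : ℝ) := by
    intro ξ hξ
    obtain ⟨-, η, hηC, hadj⟩ := hbdmem ξ hξ
    rw [haN]
    have : η ∈ N ξ := Finset.mem_filter.mpr ⟨hηC, hadj⟩
    exact_mod_cast Finset.card_pos.mpr ⟨η, this⟩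
  -- the maximal energy inside C
  set Θ := C.sup' hCne H with hΘdef
  have hΘ : ∀ η ∈ C, H η ≤ Θ := fun η hη => Finset.le_sup' H hη
  have hΘlt : ∀ ξ ∈ bd, Θ < H ξ := by
    intro ξ hξ
    obtain ⟨ηm, hηmC, hηm⟩ := Finset.exists_mem_eq_sup' hCne H
    rw [hΘdef, hηm]
    exact hcyc ηm hηmC ξ hξ
  set δ := H ξ₀ - Θ with hδdef
  have hδ : 0 < δ := by have := hΘlt ξ₀ hξ₀bd; rw [hδdef]; linarith
  -- the symmetric conductances
  set c : ℝ → Ω → Ω → ℝ :=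
    fun β η ξ => if adj η ξ then Real.exp (-β * max (H η) (H ξ)) else 0 with hc
  have hc0 : ∀ β η ξ, 0 ≤ c β η ξ := by
    intro β η ξ; rw [hc]; dsimp only
    split
    · exact (Real.exp_pos _).le
    · exact le_refl 0
  have hcpos : ∀ β η ξ, adj η ξ → 0 < c β η ξ := by
    intro β η ξ h; rw [hc]; dsimp only; rw [if_pos h]; exact Real.exp_pos _
  have hcsymm : ∀ β η ξ, c β η ξ = c β ξ η := by
    intro β η ξ; rw [hc]; dsimp only
    by_cases h : adj η ξ
    · rw [if_pos h, if_pos (hsym h), max_comm]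
    · rw [if_neg h, if_neg (fun h' => h (hsym h'))]
  have hceq : ∀ β η ξ, c β η ξ = Real.exp (-β * H η) * r β η ξ := by
    intro β η ξ; rw [hr, hc]; dsimp only
    by_cases h : adj η ξ
    · rw [if_pos h, if_pos h, ← Real.exp_add]
      congr 1
      have hmax : max (H η) (H ξ) = H η + max (H ξ - H η) 0 := by
        rcases le_total (H ξ) (H η) with h' | h'
        · rw [max_eq_left h', max_eq_right (by linarith)]; ring
        · rw [max_eq_right h', max_eq_left (by linarith)]; ring
      rw [hmax]; ring
    · rw [if_neg h, if_neg h, mul_zero]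
  have hch : ∀ β : ℝ, 0 < β → ∀ η ∈ C, ∑ ξ : Ω, c β η ξ * (u β ξ - u β η) = 0 := by
    intro β hβ η hη
    calc ∑ ξ : Ω, c β η ξ * (u β ξ - u β η)
        = Real.exp (-β * H η) * ∑ ξ : Ω, r β η ξ * (u β ξ - u β η) := by
          rw [Finset.mul_sum]
          exact Finset.sum_congr rfl fun ξ _ => by rw [hceq]; ring
      _ = 0 := by rw [huharm β hβ η hη, mul_zero]
  -- boundary values of u
  have hubd : ∀ β : ℝ, ∀ ξ ∈ bd, u β ξ = if ξ = ξ₀ then 1 else 0 := by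
    intro β ξ hξ
    by_cases h : ξ = ξ₀
    · rw [if_pos h, h, hu1]
    · rw [if_neg h, hu0 β ξ hξ h]
  -- maximum principle : 0 ≤ u ≤ 1
  obtain ⟨ξ₁, hξ₁bd⟩ := hbdne
  obtain ⟨-, η₁, hη₁C, hadj₁⟩ := hbdmem ξ₁ hξ₁bd
  have hub : ∀ β : ℝ, 0 < β → ∀ x, u β x ≤ 1 := by
    intro β hβ
    refine aux_max_principle adj C hconn bd huniv ξ₁ hξ₁bd η₁ hη₁C hadj₁ (c β) (hc0 β)
      (fun η ξ h => hcpos β η ξ h) (u β) (hch β hβ) 1 ?_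
    intro ξ hξ; rw [hubd β ξ hξ]; split <;> norm_num
  have hlb : ∀ β : ℝ, 0 < β → ∀ x, 0 ≤ u β x := by
    intro β hβ x
    have h := aux_max_principle adj C hconn bd huniv ξ₁ hξ₁bd η₁ hη₁C hadj₁ (c β) (hc0 β)
      (fun η ξ h => hcpos β η ξ h) (fun y => -(u β y)) ?_ 0 ?_ x
    · linarith
    · intro η hη
      calc ∑ ξ : Ω, c β η ξ * (-(u β ξ) - -(u β η))
          = ∑ ξ : Ω, -(c β η ξ * (u β ξ - u β η)) :=
            Finset.sum_congr rfl fun ξ _ => by ring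
        _ = -∑ ξ : Ω, c β η ξ * (u β ξ - u β η) := Finset.sum_neg_distrib _
        _ = 0 := by rw [hch β hβ η hη, neg_zero]
    · intro ξ hξ; rw [hubd β ξ hξ]; split <;> norm_num
  -- the inner boundary sum
  have hinner : ∀ (β : ℝ) (w : Ω → ℝ), ∀ ξ ∈ bd, ∑ η : Ω, c β ξ η * (w η - w ξ)
      = Real.exp (-β * H ξ) * ∑ η ∈ N ξ, (w η - w ξ) := by
    intro β w ξ hξ
    have hz : ∀ η ∈ Finset.univ, η ∉ N ξ → c β ξ η * (w η - w ξ) = 0 := by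
      intro η _ hη
      have hnadj : ¬ adj ξ η := by
        intro hadjξη
        rcases huniv η with hC | hbd'
        · exact hη (Finset.mem_filter.mpr ⟨hC, hsym hadjξη⟩)
        · exact hbdsep ξ hξ η hbd' hadjξη
      rw [hc]; dsimp only; rw [if_neg hnadj, zero_mul]
    calc ∑ η : Ω, c β ξ η * (w η - w ξ)
        = ∑ η ∈ N ξ, c β ξ η * (w η - w ξ) :=
          (Finset.sum_subset (Finset.subset_univ _) hz).symm
      _ = ∑ η ∈ N ξ, Real.exp (-β * H ξ) * (w η - w ξ) := by
          refine Finset.sum_congr rfl fun η hη => ?_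
          obtain ⟨hηC, hadjηξ⟩ := Finset.mem_filter.mp hη
          rw [hc]; dsimp only
          rw [if_pos (hsym hadjηξ), max_eq_left (hcyc η hηC ξ hξ).le]
      _ = Real.exp (-β * H ξ) * ∑ η ∈ N ξ, (w η - w ξ) := (Finset.mul_sum _ _ _).symm
  -- splitting sums over Ω = C ∪ bd
  have hdisj : Disjoint C bd := by
    rw [Finset.disjoint_left]; intro x hxC hxbd; exact (hbdmem x hxbd).1 hxC
  have hunion : C ∪ bd = Finset.univ :=
    Finset.eq_univ_of_forall fun x => Finset.mem_union.mpr (huniv x)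
  have hsplit : ∀ f : Ω → ℝ, ∑ x : Ω, f x = ∑ x ∈ C, f x + ∑ x ∈ bd, f x := by
    intro f; rw [← Finset.sum_union hdisj, hunion]
  -- the antisymmetry identity
  have hT0 : ∀ β : ℝ, ∑ η : Ω, ∑ ξ : Ω, c β η ξ * (u β ξ - u β η) = 0 := by
    intro β
    have h2 : ∑ η : Ω, ∑ ξ : Ω, c β η ξ * (u β ξ - u β η)
        = -∑ η : Ω, ∑ ξ : Ω, c β η ξ * (u β ξ - u β η) := by
      conv_lhs => rw [Finset.sum_comm]
      rw [← Finset.sum_neg_distrib]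
      refine Finset.sum_congr rfl fun x _ => ?_
      rw [← Finset.sum_neg_distrib]
      refine Finset.sum_congr rfl fun y _ => ?_
      rw [hcsymm β y x]; ring
    linarith
  -- the main boundary identity
  have hbId2 : ∀ β : ℝ, 0 < β →
      ∑ ξ ∈ bd, Real.exp (-β * H ξ) * ∑ η ∈ N ξ, u β η
        = Real.exp (-β * H ξ₀) * (a ξ₀ : ℝ) := by
    intro β hβ
    have h0 := hT0 β
    rw [hsplit] at h0
    rw [Finset.sum_eq_zero (fun η hη => hch β hβ η hη), zero_add] at h0
    have h1 : ∑ ξ ∈ bd, Real.exp (-β * H ξ) * ∑ η ∈ N ξ, (u β η - u β ξ) = 0 := by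
      rw [← h0]
      exact Finset.sum_congr rfl fun ξ hξ => (hinner β (u β) ξ hξ).symm
    have hexp : ∀ ξ ∈ bd, Real.exp (-β * H ξ) * ∑ η ∈ N ξ, (u β η - u β ξ)
        = Real.exp (-β * H ξ) * ∑ η ∈ N ξ, u β η
          - Real.exp (-β * H ξ) * ((a ξ : ℝ) * u β ξ) := by
      intro ξ hξ
      rw [Finset.sum_sub_distrib, Finset.sum_const, nsmul_eq_mul, haN]
      ring
    rw [Finset.sum_congr rfl hexp, Finset.sum_sub_distrib, sub_eq_zero] at h1
    rw [h1, Finset.sum_eq_single ξ₀]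
    · rw [hu1]; ring
    · intro ζ hζ hne; rw [hu0 β ζ hζ hne]; ring
    · intro h; exact absurd hξ₀bd h
  -- normalized weights
  set W : ℝ → Ω → ℝ := fun β ξ => Real.exp (-β * (H ξ - H ξ₀)) with hW
  have hFeq : ∀ β : ℝ, 0 < β →
      ∑ ξ ∈ bd, W β ξ * ∑ η ∈ N ξ, u β η = (a ξ₀ : ℝ) := by
    intro β hβ
    calc ∑ ξ ∈ bd, W β ξ * ∑ η ∈ N ξ, u β η
        = Real.exp (β * H ξ₀) * ∑ ξ ∈ bd, Real.exp (-β * H ξ) * ∑ η ∈ N ξ, u β η := by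
          rw [Finset.mul_sum]
          refine Finset.sum_congr rfl fun ξ _ => ?_
          rw [hW]; dsimp only
          rw [← mul_assoc, ← Real.exp_add]
          congr 2; ring
      _ = Real.exp (β * H ξ₀) * (Real.exp (-β * H ξ₀) * (a ξ₀ : ℝ)) := by rw [hbId2 β hβ]
      _ = (a ξ₀ : ℝ) := by
          rw [← mul_assoc, ← Real.exp_add]
          norm_num
  -- the Dirichlet energy bound
  have hDD : ∀ β : ℝ, 0 < β →
      ∑ η : Ω, ∑ ξ : Ω, c β η ξ * (u β ξ - u β η) ^ 2
        ≤ 2 * (Real.exp (-β * H ξ₀) * (a ξ₀ : ℝ)) := by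
    intro β hβ
    -- the double sum equals -2 P where P is the boundary term
    have hP : ∑ η : Ω, u β η * ∑ ξ : Ω, c β η ξ * (u β ξ - u β η)
        = Real.exp (-β * H ξ₀) * ∑ η ∈ N ξ₀, (u β η - 1) := by
      rw [hsplit]
      rw [Finset.sum_eq_zero (fun η hη => by rw [hch β hβ η hη, mul_zero]), zero_add]
      rw [Finset.sum_eq_single ξ₀]
      · rw [hinner β (u β) ξ₀ hξ₀bd, hu1, one_mul]
      · intro ζ hζ hne; rw [hu0 β ζ hζ hne, zero_mul]
      · intro h; exact absurd hξ₀bd h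
    have hQ : ∑ η : Ω, ∑ ξ : Ω, c β η ξ * (u β ξ - u β η) * u β ξ
        = -∑ η : Ω, ∑ ξ : Ω, c β η ξ * (u β ξ - u β η) * u β η := by
      conv_lhs => rw [Finset.sum_comm]
      rw [← Finset.sum_neg_distrib]
      refine Finset.sum_congr rfl fun x _ => ?_
      rw [← Finset.sum_neg_distrib]
      refine Finset.sum_congr rfl fun y _ => ?_
      rw [hcsymm β y x]; ring
    have hPP : ∑ η : Ω, ∑ ξ : Ω, c β η ξ * (u β ξ - u β η) * u β η
        = ∑ η : Ω, u β η * ∑ ξ : Ω, c β η ξ * (u β ξ - u β η) := by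
      refine Finset.sum_congr rfl fun η _ => ?_
      rw [Finset.mul_sum]
      exact Finset.sum_congr rfl fun ξ _ => by ring
    have hDDeq : ∑ η : Ω, ∑ ξ : Ω, c β η ξ * (u β ξ - u β η) ^ 2
        = -2 * (Real.exp (-β * H ξ₀) * ∑ η ∈ N ξ₀, (u β η - 1)) := by
      have expand : ∀ η ξ : Ω, c β η ξ * (u β ξ - u β η) ^ 2
          = c β η ξ * (u β ξ - u β η) * u β ξ - c β η ξ * (u β ξ - u β η) * u β η := by
        intro η ξ; ring
      calc ∑ η : Ω, ∑ ξ : Ω, c β η ξ * (u β ξ - u β η) ^ 2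
          = ∑ η : Ω, ∑ ξ : Ω, (c β η ξ * (u β ξ - u β η) * u β ξ
              - c β η ξ * (u β ξ - u β η) * u β η) := by
            exact Finset.sum_congr rfl fun η _ =>
              Finset.sum_congr rfl fun ξ _ => expand η ξ
        _ = ∑ η : Ω, (∑ ξ : Ω, c β η ξ * (u β ξ - u β η) * u β ξ
              - ∑ ξ : Ω, c β η ξ * (u β ξ - u β η) * u β η) :=
            Finset.sum_congr rfl fun η _ => Finset.sum_sub_distrib _ _
        _ = ∑ η : Ω, ∑ ξ : Ω, c β η ξ * (u β ξ - u β η) * u β ξ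
              - ∑ η : Ω, ∑ ξ : Ω, c β η ξ * (u β ξ - u β η) * u β η :=
            Finset.sum_sub_distrib _ _
        _ = -2 * (Real.exp (-β * H ξ₀) * ∑ η ∈ N ξ₀, (u β η - 1)) := by
            rw [hQ, hPP, hP]; ring
    rw [hDDeq]
    have hsum1 : -∑ η ∈ N ξ₀, (u β η - 1) ≤ (a ξ₀ : ℝ) := by
      rw [← Finset.sum_neg_distrib]
      calc ∑ η ∈ N ξ₀, -(u β η - 1) ≤ ∑ η ∈ N ξ₀, 1 := by
            refine Finset.sum_le_sum fun η _ => ?_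
            have := hlb β hβ η; linarith
        _ = (a ξ₀ : ℝ) := by rw [Finset.sum_const, nsmul_eq_mul, haN]; ring
    have hexppos := Real.exp_pos (-β * H ξ₀)
    nlinarith
  -- single-edge oscillation bound
  set E : ℝ → ℝ := fun β => Real.sqrt (2 * (a ξ₀ : ℝ) * Real.exp (-β * δ)) with hE
  have hE0 : ∀ β, 0 ≤ E β := fun β => Real.sqrt_nonneg _
  have hedge : ∀ β : ℝ, 0 < β → ∀ x ∈ C, ∀ y ∈ C, adj x y → |u β y - u β x| ≤ E β := by
    intro β hβ x hx y hy hadj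
    have hterm : c β x y * (u β y - u β x) ^ 2
        ≤ 2 * (Real.exp (-β * H ξ₀) * (a ξ₀ : ℝ)) := by
      refine le_trans ?_ (hDD β hβ)
      have h1 : c β x y * (u β y - u β x) ^ 2 ≤ ∑ ξ : Ω, c β x ξ * (u β ξ - u β x) ^ 2 :=
        Finset.single_le_sum (f := fun ξ => c β x ξ * (u β ξ - u β x) ^ 2)
          (fun ξ _ => mul_nonneg (hc0 β x ξ) (sq_nonneg _)) (Finset.mem_univ y)
      refine le_trans h1 ?_
      exact Finset.single_le_sum (f := fun η => ∑ ξ : Ω, c β η ξ * (u β ξ - u β η) ^ 2)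
        (fun η _ => Finset.sum_nonneg fun ξ _ => mul_nonneg (hc0 β η ξ) (sq_nonneg _))
        (Finset.mem_univ x)
    have hclow : Real.exp (-β * Θ) ≤ c β x y := by
      rw [hc]; dsimp only; rw [if_pos hadj]
      apply Real.exp_le_exp.mpr
      have : max (H x) (H y) ≤ Θ := max_le (hΘ x hx) (hΘ y hy)
      nlinarith
    have hsq : (u β y - u β x) ^ 2 ≤ 2 * (a ξ₀ : ℝ) * Real.exp (-β * δ) := by
      have hcpos' : 0 < c β x y := hcpos β x y hadj
      have h2 : Real.exp (-β * Θ) * (u β y - u β x) ^ 2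
          ≤ 2 * (Real.exp (-β * H ξ₀) * (a ξ₀ : ℝ)) := by
        nlinarith [sq_nonneg (u β y - u β x)]
      have hexpθ := Real.exp_pos (-β * Θ)
      have hkey : Real.exp (-β * H ξ₀) = Real.exp (-β * Θ) * Real.exp (-β * δ) := by
        rw [← Real.exp_add]; congr 1; rw [hδdef]; ring
      rw [hkey] at h2
      have h3 : Real.exp (-β * Θ) * (u β y - u β x) ^ 2
          ≤ Real.exp (-β * Θ) * (2 * (a ξ₀ : ℝ) * Real.exp (-β * δ)) := by
        calc Real.exp (-β * Θ) * (u β y - u β x) ^ 2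
            ≤ 2 * (Real.exp (-β * Θ) * Real.exp (-β * δ) * (a ξ₀ : ℝ)) := h2
          _ = Real.exp (-β * Θ) * (2 * (a ξ₀ : ℝ) * Real.exp (-β * δ)) := by ring
      exact (mul_le_mul_iff_right₀ hexpθ).mp h3
    rw [hE]; dsimp only
    calc |u β y - u β x| = Real.sqrt ((u β y - u β x) ^ 2) := (Real.sqrt_sq_eq_abs _).symm
      _ ≤ Real.sqrt (2 * (a ξ₀ : ℝ) * Real.exp (-β * δ)) := Real.sqrt_le_sqrt hsq
  -- uniform oscillation bound over C
  have hpath : ∀ η : Ω, ∃ n : ℕ, η ∈ C → ∀ β : ℝ, 0 < β → |u β η - u β η₀| ≤ (n : ℝ) * E β := by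
    intro η
    by_cases hη : η ∈ C
    · obtain ⟨ω, hchain, hhead, hlast, hmemω⟩ := hconn η₀ hη₀ η hη
      exact ⟨ω.length, fun _ β hβ => aux_chain_bound adj C (u β) (E β) (hE0 β)
        (hedge β hβ) ω hchain hmemω η₀ η hhead hlast⟩
    · exact ⟨0, fun h => absurd h hη⟩
  choose nn hnn using hpath
  set Nmax := Finset.univ.sup nn with hNmax
  have hosc : ∀ η ∈ C, ∀ β : ℝ, 0 < β → |u β η - u β η₀| ≤ (Nmax : ℝ) * E β := by
    intro η hη β hβ
    refine le_trans (hnn η hη β hβ) ?_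
    have : (nn η : ℝ) ≤ (Nmax : ℝ) := Nat.cast_le.mpr (Finset.le_sup (Finset.mem_univ η))
    exact mul_le_mul_of_nonneg_right this (hE0 β)
  -- the two main quantities
  set Φ : ℝ → ℝ := fun β => ∑ ξ ∈ bd, (a ξ : ℝ) * W β ξ with hΦ
  set G : ℝ → ℝ := fun β => ∑ ξ ∈ bd, W β ξ * ∑ η ∈ N ξ, (u β η - u β η₀) with hG
  have hWpos : ∀ β ξ, 0 < W β ξ := fun β ξ => Real.exp_pos _
  have hdecomp : ∀ β : ℝ, 0 < β → u β η₀ * Φ β + G β = (a ξ₀ : ℝ) := by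
    intro β hβ
    rw [← hFeq β hβ, hΦ, hG]; dsimp only
    rw [Finset.mul_sum, ← Finset.sum_add_distrib]
    refine Finset.sum_congr rfl fun ξ _ => ?_
    rw [Finset.sum_sub_distrib, Finset.sum_const, nsmul_eq_mul, ← haN]
    ring
  -- limit of Φ
  have hΦlim : Tendsto Φ atTop (nhds (∑ ξ ∈ bdStar, (a ξ : ℝ))) := by
    have hsum : ∑ ξ ∈ bdStar, (a ξ : ℝ)
        = ∑ ξ ∈ bd, if (∀ ζ ∈ bd, H ξ ≤ H ζ) then (a ξ : ℝ) else 0 := by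
      rw [hbdStar, Finset.sum_filter]
    rw [hsum]
    apply tendsto_finset_sum
    intro ξ hξ
    by_cases hmin : ∀ ζ ∈ bd, H ξ ≤ H ζ
    · rw [if_pos hmin]
      have hHeq : H ξ = H ξ₀ := le_antisymm (hmin ξ₀ hξ₀bd) (hξ₀min ξ hξ)
      have hconst : ∀ β : ℝ, (a ξ : ℝ) * W β ξ = (a ξ : ℝ) := by
        intro β; rw [hW]; dsimp only; rw [hHeq, sub_self, mul_zero, Real.exp_zero, mul_one]
      exact Tendsto.congr (fun β => (hconst β).symm) tendsto_const_nhds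
    · rw [if_neg hmin]
      push_neg at hmin
      obtain ⟨ζ, hζ, hζlt⟩ := hmin
      have ht : 0 < H ξ - H ξ₀ := by have := hξ₀min ζ hζ; linarith
      have h1 : Tendsto (fun β : ℝ => Real.exp (-(β * (H ξ - H ξ₀)))) atTop (nhds 0) :=
        Real.tendsto_exp_neg_atTop_nhds_zero.comp (Tendsto.atTop_mul_const ht tendsto_id)
      have h2 : Tendsto (fun β : ℝ => (a ξ : ℝ) * W β ξ) atTop (nhds ((a ξ : ℝ) * 0)) := by
        apply Tendsto.const_mul
        rw [hW]; dsimp only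
        simpa [neg_mul] using h1
      simpa using h2
  -- limit of E
  have hElim : Tendsto E atTop (nhds 0) := by
    have h1 : Tendsto (fun β : ℝ => 2 * (a ξ₀ : ℝ) * Real.exp (-β * δ)) atTop (nhds 0) := by
      have h0 : Tendsto (fun β : ℝ => Real.exp (-(β * δ))) atTop (nhds 0) :=
        Real.tendsto_exp_neg_atTop_nhds_zero.comp (Tendsto.atTop_mul_const hδ tendsto_id)
      have := h0.const_mul (2 * (a ξ₀ : ℝ))
      simpa [neg_mul] using this
    have h2 := (Real.continuous_sqrt.tendsto 0).comp h1
    rw [Real.sqrt_zero] at h2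
    rw [hE]
    exact h2
  -- limit of G
  have hGlim : Tendsto G atTop (nhds 0) := by
    set Kc : ℝ := ∑ ξ ∈ bd, (a ξ : ℝ) * (Nmax : ℝ) with hKc
    have hbound : ∀ β : ℝ, 0 < β → |G β| ≤ Kc * E β := by
      intro β hβ
      rw [hG]; dsimp only
      calc |∑ ξ ∈ bd, W β ξ * ∑ η ∈ N ξ, (u β η - u β η₀)|
          ≤ ∑ ξ ∈ bd, |W β ξ * ∑ η ∈ N ξ, (u β η - u β η₀)| :=
            Finset.abs_sum_le_sum_abs _ _
        _ ≤ ∑ ξ ∈ bd, (a ξ : ℝ) * (Nmax : ℝ) * E β := by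
            refine Finset.sum_le_sum fun ξ hξ => ?_
            rw [abs_mul]
            have hW1 : |W β ξ| ≤ 1 := by
              rw [abs_of_pos (hWpos β ξ)]
              apply Real.exp_le_one_iff.mpr
              have h1 : 0 ≤ H ξ - H ξ₀ := by have := hξ₀min ξ hξ; linarith
              have h2 : (0:ℝ) ≤ β := hβ.le
              nlinarith
            have hSb : |∑ η ∈ N ξ, (u β η - u β η₀)| ≤ (a ξ : ℝ) * ((Nmax : ℝ) * E β) := by
              refine le_trans (Finset.abs_sum_le_sum_abs _ _) ?_
              calc ∑ η ∈ N ξ, |u β η - u β η₀|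
                  ≤ ∑ η ∈ N ξ, (Nmax : ℝ) * E β := by
                    refine Finset.sum_le_sum fun η hη => ?_
                    exact hosc η (Finset.mem_filter.mp hη).1 β hβ
                _ = (a ξ : ℝ) * ((Nmax : ℝ) * E β) := by
                    rw [Finset.sum_const, nsmul_eq_mul, haN]
            calc |W β ξ| * |∑ η ∈ N ξ, (u β η - u β η₀)|
                ≤ 1 * ((a ξ : ℝ) * ((Nmax : ℝ) * E β)) := by
                  apply mul_le_mul hW1 hSb (abs_nonneg _) zero_le_one
              _ = (a ξ : ℝ) * (Nmax : ℝ) * E β := by ring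
        _ = Kc * E β := by rw [hKc, Finset.sum_mul]
    have hev : ∀ᶠ β in atTop, ‖G β‖ ≤ Kc * E β := by
      filter_upwards [eventually_gt_atTop (0:ℝ)] with β hβ
      simpa [Real.norm_eq_abs] using hbound β hβ
    exact squeeze_zero_norm' hev (by simpa only [mul_zero] using hElim.const_mul Kc)
  -- positivity of the limiting denominator
  have hApos : 0 < ∑ ξ ∈ bdStar, (a ξ : ℝ) := by
    refine Finset.sum_pos' (fun ξ _ => Nat.cast_nonneg _) ⟨ξ₀, hξ₀, hapos ξ₀ hξ₀bd⟩
  have hΦpos : ∀ β : ℝ, 0 < Φ β := by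
    intro β
    rw [hΦ]; dsimp only
    refine Finset.sum_pos' (fun ξ _ => mul_nonneg (Nat.cast_nonneg _) (hWpos β ξ).le)
      ⟨ξ₀, hξ₀bd, mul_pos (hapos ξ₀ hξ₀bd) (hWpos β ξ₀)⟩
  -- conclusion
  have hfinal : Tendsto (fun β => ((a ξ₀ : ℝ) - G β) / Φ β) atTop
      (nhds (((a ξ₀ : ℝ) - 0) / ∑ ξ ∈ bdStar, (a ξ : ℝ))) :=
    Tendsto.div (tendsto_const_nhds.sub hGlim) hΦlim (ne_of_gt hApos)
  have heq : (fun β => u β η₀) =ᶠ[atTop] fun β => ((a ξ₀ : ℝ) - G β) / Φ β := by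
    filter_upwards [eventually_gt_atTop (0:ℝ)] with β hβ
    have h := hdecomp β hβ
    rw [eq_div_iff (ne_of_gt (hΦpos β))]
    linarith
  refine Tendsto.congr' heq.symm ?_
  simpa using hfinal
end
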